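/- arXiv:1607.08041 — 4 statements merged into one kernel-verified Lean document; each statement's English description precedes it below -/
import Mathlib

section
/- (Existence of a peaking-criterion pair.) Let T = (V,E) be a finite tree and f an atomic cost function satisfying max composition, with f({x},x)=0 for all x. Suppose for some adjacent vertices u, v one has f(V_{−v}(u) ∪ {v}, v) > 𝒯. Then there exist adjacent vertices s, t with V_{−t}(s) ⊆ V_{−v}(u), t ∈ V_{−v}(u) ∪ {v}, such that f(V_{−t}(s), s) ≤ 𝒯 and f(V_{−t}(s) ∪ {t}, t) > 𝒯. -/
open scoped ENNReal Classical

variable {V : Type*}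

/-- Vertices reachable from `u` by a walk avoiding `v` and staying inside `U`. -/
def branchIn (G : SimpleGraph V) (U : Set V) (v u : V) : Set V :=
  {x | ∃ p : G.Walk u x, v ∉ p.support ∧ ∀ y ∈ p.support, y ∈ U}

/-- The component `V_{-v}(u)` of `T - v` containing `u`. -/
def branch (G : SimpleGraph V) (v u : V) : Set V := branchIn G Set.univ v u

/-- Atomic cost function axioms (monotone min-max). -/
structure AtomicCost (G : SimpleGraph V) (f : Set V → V → ℝ≥0∞) : Prop where
  not_mem : ∀ U v, v ∉ U → f U v = ⊤
  disconn : ∀ U v, ¬ (G.induce U).Connected → f U v = ⊤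
  single : ∀ v, f {v} v = 0
  setMono : ∀ U₁ U₂ v, v ∈ U₁ → U₁ ⊆ U₂ → (G.induce U₁).Connected →
    (G.induce U₂).Connected → f U₁ v ≤ f U₂ v
  pathMono : ∀ U x y, x ∈ U → y ∉ U → (G.induce U).Connected → G.Adj x y →
    f U x ≤ f (U ∪ {y}) y
  maxComp : ∀ U v, v ∈ U → (G.induce U).Connected →
    f U v = ⨆ u ∈ {u | G.Adj v u ∧ u ∈ U}, f (branchIn G U v u ∪ {v}) v

/-- `S` serves the ground set `A` with cost at most `T`:
there is a partition of `A` into connected blocks, each containing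
exactly one sink of `S`, each block served within cost `T`. -/
def FeasibleOn (G : SimpleGraph V) (f : Set V → V → ℝ≥0∞) (T : ℝ≥0∞)
    (A S : Set V) : Prop :=
  ∃ PP : Set (Set V), (⋃₀ PP = A) ∧
    (∀ P ∈ PP, ∀ Q ∈ PP, P ≠ Q → Disjoint P Q) ∧
    (∀ P ∈ PP, (G.induce P).Connected) ∧
    (∀ P ∈ PP, ∃! s, s ∈ S ∩ P) ∧
    (∀ P ∈ PP, ∀ s ∈ S ∩ P, f P s ≤ T)

/-- Vertices on some (the unique, in a tree) path from `u` to `v`. -/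
def pathSet (G : SimpleGraph V) (u v : V) : Set V :=
  {x | ∃ p : G.Path u v, x ∈ p.1.support}

/-- Hub tree vertex set: union of paths between pairs of sinks. -/
def hubSet (G : SimpleGraph V) (S : Set V) : Set V :=
  ⋃ s₁ ∈ S, ⋃ s₂ ∈ S, pathSet G s₁ s₂

/-- `BP(v,s)`: the path from `v` to `s` together with all outstanding
branches attached to its vertices. -/
def BP (G : SimpleGraph V) (S : Set V) (v s : V) : Set V :=
  pathSet G v s ∪
    ⋃ w ∈ pathSet G v s, ⋃ η ∈ {η | G.Adj w η ∧ η ∉ hubSet G S}, branch G w η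

/-- RC-viability: every outstanding branch attached at a hub-tree node `w`
can be served by `w` within cost `T`. -/
def RCviable (G : SimpleGraph V) (f : Set V → V → ℝ≥0∞) (T : ℝ≥0∞)
    (S : Set V) : Prop :=
  ∀ w ∈ hubSet G S, ∀ η, G.Adj w η → η ∉ hubSet G S →
    f (branch G w η ∪ {w}) w ≤ T

/-- Descendants of `x` in the tree rooted at `r`. -/
def descend (G : SimpleGraph V) (r x : V) : Set V := {y | x ∈ pathSet G r y}

/-- A vertex set is self-sufficient if it can be served by its own sinks. -/
def SelfSuff (G : SimpleGraph V) (f : Set V → V → ℝ≥0∞) (T : ℝ≥0∞)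
    (S : Set V) (V' : Set V) : Prop :=
  FeasibleOn G f T V' (S ∩ V')

/-- Recursive self-sufficiency of the subtree rooted at `x` (root `r`). -/
def RecSS (G : SimpleGraph V) (f : Set V → V → ℝ≥0∞) (T : ℝ≥0∞)
    (S : Set V) (r x : V) : Prop :=
  ∀ u ∈ hubSet G S, u ∈ descend G r x → SelfSuff G f T S (descend G r u)

/-- Boundary of a vertex set: its vertices adjacent to the outside. -/
def boundary (G : SimpleGraph V) (C : Set V) : Set V :=
  {x ∈ C | ∃ y, y ∉ C ∧ G.Adj x y}

/-- Compartment w.r.t. `W`: a maximal connected vertex set whose boundary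
lies inside `W`. -/
def IsCompartment (G : SimpleGraph V) (W C : Set V) : Prop :=
  C.Nonempty ∧ (G.induce C).Connected ∧ boundary G C ⊆ W ∧
    ∀ C', C ⊆ C' → (G.induce C').Connected → boundary G C' ⊆ W → C' = C

/-- Partition of `A` into connected blocks, each with exactly one sink of `S`. -/
def IsPart (G : SimpleGraph V) (A S : Set V) (PP : Set (Set V)) : Prop :=
  ⋃₀ PP = A ∧ (∀ P ∈ PP, ∀ Q ∈ PP, P ≠ Q → Disjoint P Q) ∧
    (∀ P ∈ PP, (G.induce P).Connected) ∧ (∀ P ∈ PP, ∃! s, s ∈ S ∩ P)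

/-- `F(S)`: minimum over partitions of the max block cost. -/
noncomputable def Fcost (G : SimpleGraph V) (f : Set V → V → ℝ≥0∞)
    (S : Set V) : ℝ≥0∞ :=
  ⨅ PP ∈ {PP : Set (Set V) | IsPart G Set.univ S PP}, ⨆ P ∈ PP, ⨅ s ∈ S ∩ P, f P s

/-- Path metric induced by edge lengths `ℓ`. -/
noncomputable def tdist (G : SimpleGraph V) (ℓ : Sym2 V → ℝ≥0∞) (u v : V) : ℝ≥0∞ :=
  ⨅ p : G.Walk u v, (p.edges.map ℓ).sum

lemma mem_branch_self {G : SimpleGraph V} {v u : V} (h : v ≠ u) : u ∈ branch G v u :=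
  ⟨SimpleGraph.Walk.nil, by simpa using h, by simp⟩

lemma notMem_branch {G : SimpleGraph V} {v u : V} : v ∉ branch G v u := by
  rintro ⟨p, hv, -⟩; exact hv p.end_mem_support

lemma branchIn_subset {G : SimpleGraph V} {U : Set V} {v u : V} :
    branchIn G U v u ⊆ U := by
  rintro x ⟨p, -, hU⟩; exact hU x p.end_mem_support

lemma reachable_induce {G : SimpleGraph V} {S : Set V} {a x : V} (ha : a ∈ S) (hx : x ∈ S)
    (p : G.Walk a x) (hp : ∀ y ∈ p.support, y ∈ S) :
    (G.induce S).Reachable ⟨a, ha⟩ ⟨x, hx⟩ := by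
  induction p with
  | nil => rfl
  | @cons a b x h q ih =>
      have hb : b ∈ S := hp b (by simp)
      have h1 : (G.induce S).Adj ⟨a, ha⟩ ⟨b, hb⟩ := h
      exact (h1.reachable).trans (ih hb hx (fun y hy => hp y (by simp [hy])))

lemma branch_support {G : SimpleGraph V} {v u : V} {x : V} (hx : x ∈ branch G v u) :
    ∀ᵉ (p : G.Walk u x), v ∉ p.support → ∀ y ∈ p.support, y ∈ branch G v u := by
  intro p hv y hy
  exact ⟨p.takeUntil y hy, fun hc => hv ((p.support_takeUntil_subset hy) hc), by simp⟩

lemma induce_branch_connected {G : SimpleGraph V} {v u : V} (h : v ≠ u) :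
    (G.induce (branch G v u)).Connected := by
  rw [SimpleGraph.connected_iff]
  refine ⟨?_, ⟨⟨u, mem_branch_self h⟩⟩⟩
  have key : ∀ x : branch G v u, (G.induce (branch G v u)).Reachable ⟨u, mem_branch_self h⟩ x := by
    rintro ⟨x, hx⟩
    obtain ⟨p, hv, -⟩ := hx
    exact reachable_induce _ _ p (branch_support ⟨p, hv, by simp⟩ p hv)
  intro x y
  exact (key x).symm.trans (key y)

lemma walk_avoid {G : SimpleGraph V} (hG : G.IsTree) {v u w : V}
    (hvu : G.Adj v u) (huw : G.Adj u w) (hwv : w ≠ v) {y : V}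
    (q : G.Walk w y) (hu : u ∉ q.support) : v ∉ q.support := by
  intro hv
  have := Classical.decEq V
  set q' := q.takeUntil v hv with hq'
  have hq's : q'.support ⊆ q.support := q.support_takeUntil_subset hv
  have hbp : q'.bypass.IsPath := q'.bypass_isPath
  have hbs : q'.bypass.support ⊆ q'.support := q'.support_bypass_subset
  let p2 : G.Walk w v := .cons huw.symm (.cons hvu.symm .nil)
  have hp2 : p2.IsPath := by
    rw [SimpleGraph.Walk.isPath_def]
    simp [p2, huw.ne', hwv, hvu.ne']
  obtain ⟨P, -, hP⟩ := hG.existsUnique_path w v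
  have e1 : q'.bypass = P := hP _ hbp
  have e2 : p2 = P := hP _ hp2
  have humem : u ∈ p2.support := by simp [p2]
  rw [e2, ← e1] at humem
  exact hu (hq's (hbs humem))

lemma branchIn_branch_eq {G : SimpleGraph V} (hG : G.IsTree) {v u w : V}
    (hvu : G.Adj v u) (huw : G.Adj u w) (hwv : w ≠ v) :
    branchIn G (branch G v u) u w = branch G u w := by
  ext x
  constructor
  · rintro ⟨p, hu, -⟩
    exact ⟨p, hu, by simp⟩
  · rintro ⟨q, hu, -⟩
    have hv : v ∉ q.support := walk_avoid hG hvu huw hwv q hu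
    refine ⟨q, hu, ?_⟩
    intro y hy
    refine ⟨.cons huw (q.takeUntil y hy), ?_, by simp⟩
    simp only [SimpleGraph.Walk.support_cons, List.mem_cons]
    rintro (rfl | hc)
    · exact hvu.ne rfl
    · exact hv (q.support_takeUntil_subset hy hc)

lemma branch_subset_branch {G : SimpleGraph V} (hG : G.IsTree) {v u w : V}
    (hvu : G.Adj v u) (huw : G.Adj u w) (hwv : w ≠ v) :
    branch G u w ⊆ branch G v u := by
  rw [← branchIn_branch_eq hG hvu huw hwv]; exact branchIn_subset

lemma stmt3_aux [Fintype V] (G : SimpleGraph V) (hG : G.IsTree)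
    (f : Set V → V → ℝ≥0∞) (hf : AtomicCost G f) (T : ℝ≥0∞) :
    ∀ n : ℕ, ∀ u v : V, (branch G v u).ncard ≤ n → G.Adj v u →
    f (branch G v u ∪ {v}) v > T →
    ∃ s t : V, G.Adj s t ∧ branch G t s ⊆ branch G v u ∧
      t ∈ branch G v u ∪ {v} ∧
      f (branch G t s) s ≤ T ∧ f (branch G t s ∪ {t}) t > T := by
  intro n
  induction n with
  | zero =>
      intro u v hn hadj h
      exact absurd ((Set.ncard_eq_zero (Set.toFinite _)).mp (Nat.le_zero.mp hn) ▸ mem_branch_self hadj.ne)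
        (Set.notMem_empty u)
  | succ n ih =>
      intro u v hn hadj h
      by_cases hb : f (branch G v u) u ≤ T
      · exact ⟨u, v, hadj.symm, le_refl _, Or.inr rfl, hb, h⟩
      push_neg at hb
      have hu : u ∈ branch G v u := mem_branch_self hadj.ne
      have hconn := induce_branch_connected (G := G) hadj.ne
      rw [hf.maxComp _ u hu hconn] at hb
      rw [lt_iSup_iff] at hb
      obtain ⟨w, hb⟩ := hb
      rw [lt_iSup_iff] at hb
      obtain ⟨⟨huw, hwb⟩, hb⟩ := hb
      have hwv : w ≠ v := fun e => notMem_branch (e ▸ hwb)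
      rw [branchIn_branch_eq hG hadj huw hwv] at hb
      have hsub : branch G u w ⊆ branch G v u := branch_subset_branch hG hadj huw hwv
      have hne : u ∉ branch G u w := notMem_branch
      have hcard : (branch G u w).ncard ≤ n := by
        have hlt : (branch G u w).ncard < (branch G v u).ncard :=
          Set.ncard_lt_ncard (ssubset_of_subset_not_subset hsub (fun hc => hne (hc hu)))
            (Set.toFinite _)
        omega
      obtain ⟨s, t, h1, h2, h3, h4, h5⟩ := ih w u hcard huw hb
      refine ⟨s, t, h1, h2.trans hsub, ?_, h4, h5⟩
      rcases h3 with h3 | h3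
      · exact Or.inl (hsub h3)
      · exact Or.inl (h3 ▸ hu)

/-- existence of a peaking-criterion pair: if
`f (V_{-v}(u) ∪ {v}) v > T` for adjacent `u, v`, then there are adjacent
`s, t` with `V_{-t}(s) ⊆ V_{-v}(u)` and `t ∈ V_{-v}(u) ∪ {v}` such that
`f (V_{-t}(s)) s ≤ T` and `f (V_{-t}(s) ∪ {t}) t > T`. -/
theorem stmt_3 [Fintype V] (G : SimpleGraph V) (hG : G.IsTree)
    (f : Set V → V → ℝ≥0∞) (hf : AtomicCost G f) (T : ℝ≥0∞)
    (u v : V) (hadj : G.Adj v u)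
    (h : f (branch G v u ∪ {v}) v > T) :
    ∃ s t : V, G.Adj s t ∧ branch G t s ⊆ branch G v u ∧
      t ∈ branch G v u ∪ {v} ∧
      f (branch G t s) s ≤ T ∧ f (branch G t s ∪ {t}) t > T :=
  stmt3_aux G hG f hf T (branch G v u).ncard u v le_rfl hadj h
end

section
/- (Peaking criterion correctness.) Let T=(V,E) be a finite tree with atomic cost f (set monotone, path monotone, max composition). Suppose S ⊆ V is a feasible sink placement (there is a partition of V into connected blocks each containing exactly one sink s ∈ S with f(block, s) ≤ 𝒯). If adjacent vertices (u,v) satisfy f(V_{−v}(u), u) ≤ 𝒯 and f(V_{−v}(u) ∪ {v}, v) > 𝒯, then S′ := (S \ V_{−v}(u)) ∪ {u} is also a feasible sink placement and |S′| ≤ |S|. -/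
open scoped ENNReal Classical

variable {V : Type*}

namespace PeakAux

/-- Hom from induced graph to ambient graph. -/
def indHom (G : SimpleGraph V) (s : Set V) : G.induce s →g G := ⟨Subtype.val, fun h => h⟩

lemma reach_of_walk (G : SimpleGraph V) {s : Set V} {a b : V} (p : G.Walk a b)
    (hp : ∀ x ∈ p.support, x ∈ s) (ha : a ∈ s) (hb : b ∈ s) :
    (G.induce s).Reachable ⟨a, ha⟩ ⟨b, hb⟩ := by
  induction p with
  | nil => rfl
  | @cons a c b h q ih =>
      have hc : c ∈ s := hp c (by simp)
      have h1 : (G.induce s).Adj ⟨a, ha⟩ ⟨c, hc⟩ := h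
      exact (h1.reachable).trans (ih (fun x hx => hp x (by simp [hx])) hc hb)

lemma conn_of_walks (G : SimpleGraph V) {s : Set V} {b : V} (hb : b ∈ s)
    (h : ∀ x ∈ s, ∃ p : G.Walk b x, ∀ y ∈ p.support, y ∈ s) :
    (G.induce s).Connected := by
  have : Nonempty s := ⟨⟨b, hb⟩⟩
  refine ⟨fun x y => ?_⟩
  obtain ⟨px, hpx⟩ := h x.1 x.2
  obtain ⟨py, hpy⟩ := h y.1 y.2
  exact (reach_of_walk G px hpx hb x.2).symm.trans (reach_of_walk G py hpy hb y.2)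

lemma exists_path_in (G : SimpleGraph V) {s : Set V} (hs : (G.induce s).Connected)
    {a b : V} (ha : a ∈ s) (hb : b ∈ s) :
    ∃ p : G.Walk a b, p.IsPath ∧ ∀ y ∈ p.support, y ∈ s := by
  obtain ⟨w⟩ := hs.preconnected ⟨a, ha⟩ ⟨b, hb⟩
  set w' : G.Walk a b := w.map (indHom G s)
  have hsupp : ∀ y ∈ w'.support, y ∈ s := by
    intro y hy
    rw [show w'.support = w.support.map (indHom G s) from SimpleGraph.Walk.support_map (f := indHom G s) (p := w)] at hy
    obtain ⟨z, _, rfl⟩ := List.mem_map.1 hy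
    exact z.2
  exact ⟨w'.toPath, w'.toPath.2, fun y hy => hsupp y (w'.support_toPath_subset hy)⟩

end PeakAux

namespace PeakAux

open SimpleGraph Walk

variable {G : SimpleGraph V}

lemma mem_branchIn_self {U : Set V} {v u : V} (hU : u ∈ U) (hne : u ≠ v) :
    u ∈ branchIn G U v u :=
  ⟨.nil, by simp [Ne.symm hne], by simpa using hU⟩

lemma branchIn_subset {U : Set V} {v u : V} : branchIn G U v u ⊆ U :=
  fun _ ⟨p, _, h2⟩ => h2 _ p.end_mem_support

lemma branchIn_conn {U : Set V} {v u : V} (hU : u ∈ U) (hne : u ≠ v) :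
    (G.induce (branchIn G U v u)).Connected := by
  apply conn_of_walks G (mem_branchIn_self hU hne)
  rintro x ⟨p, hv, hU'⟩
  refine ⟨p, fun y hy => ⟨p.takeUntil y hy, fun hvv => hv (p.support_takeUntil_subset hy hvv),
    fun z hz => hU' z (p.support_takeUntil_subset hy hz)⟩⟩

lemma mem_branch_iff {v u x : V} : x ∈ branch G v u ↔ ∃ p : G.Walk u x, v ∉ p.support :=
  ⟨fun ⟨p, h, _⟩ => ⟨p, h⟩, fun ⟨p, h⟩ => ⟨p, h, fun _ _ => trivial⟩⟩

lemma u_mem_branch {v u : V} (hne : u ≠ v) : u ∈ branch G v u :=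
  mem_branchIn_self trivial hne

lemma v_not_mem_branch {v u : V} : v ∉ branch G v u :=
  fun ⟨p, h, _⟩ => h p.end_mem_support

lemma cross (hG : G.IsAcyclic) {u v : V} (hadj : G.Adj u v) {x y : V}
    (hx : x ∈ branch G v u) (hy : y ∉ branch G v u) (hxy : G.Adj x y) :
    x = u ∧ y = v := by
  obtain ⟨p0, hv0⟩ := mem_branch_iff.1 hx
  have hyv : y = v := by
    by_contra hne
    refine hy (mem_branch_iff.2 ⟨p0.concat hxy, ?_⟩)
    rw [SimpleGraph.Walk.support_concat]
    simp only [List.concat_eq_append, List.mem_append, List.mem_singleton]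
    rintro (h | h)
    · exact hv0 h
    · exact hne h.symm
  refine ⟨?_, hyv⟩
  have hxv : G.Adj x v := hyv ▸ hxy
  set p : G.Walk u x := (p0.toPath : G.Walk u x) with hp
  have hpPath : p.IsPath := p0.toPath.2
  have hvp : v ∉ p.support := fun h => hv0 (p0.support_toPath_subset h)
  have hr : (SimpleGraph.Walk.cons hxv.symm p.reverse).IsPath := by
    rw [SimpleGraph.Walk.cons_isPath_iff]
    exact ⟨hpPath.reverse, by rwa [SimpleGraph.Walk.support_reverse, List.mem_reverse]⟩
  have := hG.path_unique ⟨_, hr⟩ (SimpleGraph.Path.singleton hadj.symm)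
  have hlen := congrArg (fun q : G.Path v u => q.1.length) this
  simp only [SimpleGraph.Path.singleton, SimpleGraph.Walk.length_cons,
    SimpleGraph.Walk.length_reverse, SimpleGraph.Walk.length_nil] at hlen
  have hlen0 : p.length = 0 := by omega
  exact (SimpleGraph.Walk.eq_of_length_eq_zero hlen0).symm

lemma walk_cross (hG : G.IsAcyclic) {u v : V} (hadj : G.Adj u v) {a b : V}
    (p : G.Walk a b) : a ∈ branch G v u → b ∉ branch G v u →
    u ∈ p.support ∧ v ∈ p.support := by
  induction p with
  | nil => exact fun ha hb => absurd ha hb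
  | @cons a c b h q ih =>
      intro ha hb
      by_cases hc : c ∈ branch G v u
      · obtain ⟨h1, h2⟩ := ih hc hb
        exact ⟨by simp [h1], by simp [h2]⟩
      · obtain ⟨he1, he2⟩ := cross hG hadj ha hc h
        refine ⟨?_, ?_⟩
        · rw [← he1]; simp
        · rw [← he2]
          have : c ∈ (SimpleGraph.Walk.cons h q).support := by simp
          exact this

lemma walk_cross' (hG : G.IsAcyclic) {u v : V} (hadj : G.Adj u v) {a b : V}
    (p : G.Walk a b) (ha : a ∉ branch G v u) (hb : b ∈ branch G v u) :
    u ∈ p.support ∧ v ∈ p.support := by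
  have := walk_cross hG hadj p.reverse hb ha
  simpa [SimpleGraph.Walk.support_reverse] using this

lemma split_contra {a b t w : V} {p : G.Walk a b} (hp : p.IsPath) (ht : t ∈ p.support)
    (h1 : w ∈ (p.takeUntil t ht).support) (h2 : w ∈ (p.dropUntil t ht).support)
    (hwt : w ≠ t) : False := by
  have hsp := hp.support_nodup
  rw [← p.take_spec ht, SimpleGraph.Walk.support_append, List.nodup_append] at hsp
  have h2' : w ∈ (p.dropUntil t ht).support.tail := by
    have := (p.dropUntil t ht).support_eq_cons
    rw [this] at h2
    rcases List.mem_cons.1 h2 with h2 | h2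
    · exact absurd h2 hwt
    · exact h2
  exact hsp.2.2 w h1 w h2' rfl

lemma path_subset_branch (hG : G.IsAcyclic) {u v : V} (hadj : G.Adj u v) {a b : V}
    (p : G.Walk a b) (hp : p.IsPath) (ha : a ∈ branch G v u) (hb : b ∈ branch G v u) :
    ∀ x ∈ p.support, x ∈ branch G v u := by
  intro t ht; by_contra htB
  have h1 := (walk_cross hG hadj (p.takeUntil t ht) ha htB).1
  have h2 := (walk_cross' hG hadj (p.dropUntil t ht) htB hb).1
  exact split_contra hp ht h1 h2 (ne_of_mem_of_not_mem (u_mem_branch hadj.ne) htB)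

lemma path_avoid_branch (hG : G.IsAcyclic) {u v : V} (hadj : G.Adj u v) {a b : V}
    (p : G.Walk a b) (hp : p.IsPath) (ha : a ∉ branch G v u) (hb : b ∉ branch G v u) :
    ∀ x ∈ p.support, x ∉ branch G v u := by
  intro t ht htB
  have h1 := (walk_cross' hG hadj (p.takeUntil t ht) ha htB).2
  have h2 := (walk_cross hG hadj (p.dropUntil t ht) htB hb).2
  exact split_contra hp ht h1 h2 (ne_of_mem_of_not_mem htB v_not_mem_branch).symm

lemma union_conn {s t : Set V} (h1 : (G.induce s).Connected)
    (h2 : (G.induce t).Connected) {x : V} (hxs : x ∈ s) (hxt : x ∈ t) :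
    (G.induce (s ∪ t)).Connected := by
  apply conn_of_walks G (Set.mem_union_left t hxs)
  rintro y (hy | hy)
  · obtain ⟨p, _, hp⟩ := exists_path_in G h1 hxs hy
    exact ⟨p, fun z hz => Or.inl (hp z hz)⟩
  · obtain ⟨p, _, hp⟩ := exists_path_in G h2 hxt hy
    exact ⟨p, fun z hz => Or.inr (hp z hz)⟩

lemma insert_conn {s : Set V} (h1 : (G.induce s).Connected) {a b : V}
    (hb : b ∈ s) (hab : G.Adj a b) :
    (G.induce (s ∪ {a})).Connected := by
  apply conn_of_walks G (Set.mem_union_left _ hb)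
  rintro y (hy | hy)
  · obtain ⟨p, _, hp⟩ := exists_path_in G h1 hb hy
    exact ⟨p, fun z hz => Or.inl (hp z hz)⟩
  · rcases hy with rfl
    exact ⟨SimpleGraph.Walk.cons hab.symm .nil, by
      intro z hz; simp at hz; rcases hz with rfl | rfl
      · exact Or.inl hb
      · exact Or.inr rfl⟩

end PeakAux

namespace PeakAux

lemma chain {G : SimpleGraph V} {f : Set V → V → ℝ≥0∞} (hf : AtomicCost G f)
    {P : Set V} (hP : (G.induce P).Connected) {c s : V} (q : G.Walk c s) :
    q.IsPath → (∀ x ∈ q.support, x ∈ P) →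
    ∀ {A : Set V}, (G.induce A).Connected → A ⊆ P → c ∈ A →
    (∀ x ∈ q.support, x ∈ A → x = c) → f A c ≤ f P s := by
  induction q with
  | nil =>
      intro _ _ A hA hAP hc _
      exact hf.setMono _ _ _ hc hAP hA hP
  | @cons a d b h q ih =>
      intro hq hqP A hA hAP hc hdisj
      have hcq : a ∉ q.support := ((SimpleGraph.Walk.cons_isPath_iff h q).1 hq).2
      have hcd : a ≠ d := fun he => hcq (he ▸ q.start_mem_support)
      have hdA : d ∉ A := fun hdA => hcd ((hdisj d (by simp) hdA).symm)
      have step := hf.pathMono A a d hc hdA hA h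
      refine step.trans (ih ((SimpleGraph.Walk.cons_isPath_iff h q).1 hq).1
        (fun x hx => hqP x (by simp [hx])) (insert_conn hA hc h.symm)
        ?_ (Or.inr rfl) ?_)
      · intro x hx
        rcases hx with hx | hx
        · exact hAP hx
        · rcases hx with rfl
          exact hqP _ (by rw [SimpleGraph.Walk.support_cons]; exact List.mem_cons_of_mem _ q.start_mem_support)
      · intro x hx hxA
        rcases hxA with hxA | hxA
        · exact absurd ((hdisj x (by simp [hx]) hxA) ▸ hx) hcq
        · exact hxA

end PeakAux

namespace PeakAux

lemma diff_conn {G : SimpleGraph V} (hAc : G.IsAcyclic) {u v : V} (hadj : G.Adj u v)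
    {P : Set V} (hP : (G.induce P).Connected)
    {c : V} (hc : c ∈ P) (hcB : c ∉ branch G v u) :
    (G.induce (P \ branch G v u)).Connected := by
  apply conn_of_walks G (⟨hc, hcB⟩ : c ∈ P \ branch G v u)
  intro y hy
  obtain ⟨p, hp, hpP⟩ := exists_path_in G hP hc hy.1
  exact ⟨p, fun z hz => ⟨hpP z hz, path_avoid_branch hAc hadj p hp hcB hy.2 z hz⟩⟩

end PeakAux


/-- peaking criterion correctness: if `S` is a feasible sink
placement and adjacent `(u,v)` satisfy the peaking criterion, then
`S' = (S \ V_{-v}(u)) ∪ {u}` is a feasible sink placement with `|S'| ≤ |S|`. -/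
theorem stmt_5 [Fintype V] (G : SimpleGraph V) (hG : G.IsTree)
    (f : Set V → V → ℝ≥0∞) (hf : AtomicCost G f) (T : ℝ≥0∞)
    (S : Set V) (hS : FeasibleOn G f T Set.univ S)
    (u v : V) (hadj : G.Adj u v)
    (h1 : f (branch G v u) u ≤ T) (h2 : f (branch G v u ∪ {v}) v > T) :
    FeasibleOn G f T Set.univ ((S \ branch G v u) ∪ {u}) ∧
      ((S \ branch G v u) ∪ {u}).ncard ≤ S.ncard := by
  classical
  obtain ⟨PP, hUnion, hDisj, hConn, hSink, hCost⟩ := hS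
  set B := branch G v u with hB
  set S' := (S \ B) ∪ {u} with hS'
  have hAc : G.IsAcyclic := hG.IsAcyclic
  have huv : u ≠ v := hadj.ne
  have huB : u ∈ B := PeakAux.u_mem_branch huv
  have hvB : v ∉ B := PeakAux.v_not_mem_branch
  have hBconn : (G.induce B).Connected := PeakAux.branchIn_conn trivial huv
  have hblock : ∀ x : V, ∃ P ∈ PP, x ∈ P := by
    intro x
    have hx : x ∈ ⋃₀ PP := by rw [hUnion]; trivial
    exact Set.mem_sUnion.1 hx
  have hblock_uniq : ∀ {P Q : Set V}, P ∈ PP → Q ∈ PP → ∀ {x : V}, x ∈ P → x ∈ Q → P = Q := by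
    intro P Q hP hQ x hxP hxQ
    by_contra hne
    exact Set.disjoint_left.1 (hDisj P hP Q hQ hne) hxP hxQ
  have H1 : ∀ P ∈ PP, ∀ a ∈ P, a ∈ B → ∀ b ∈ P, b ∉ B → u ∈ P ∧ v ∈ P := by
    intro P hP a haP haB b hbP hbB
    obtain ⟨p, hp, hpP⟩ := PeakAux.exists_path_in G (hConn P hP) haP hbP
    obtain ⟨c1, c2⟩ := PeakAux.walk_cross hAc hadj p haB hbB
    exact ⟨hpP u c1, hpP v c2⟩
  -- there is a sink inside B
  have C0 : (S ∩ B).Nonempty := by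
    by_contra hSB
    rw [Set.not_nonempty_iff_eq_empty] at hSB
    have hnoB : ∀ t, t ∈ S → t ∉ B := fun t ht hB' =>
      (Set.eq_empty_iff_forall_notMem.1 hSB t) ⟨ht, hB'⟩
    obtain ⟨Pu, hPu, huPu⟩ := hblock u
    obtain ⟨s0, hs0, hs0U⟩ := hSink Pu hPu
    have hs0B : s0 ∉ B := hnoB s0 hs0.1
    have hvPu : v ∈ Pu := (H1 Pu hPu u huPu huB s0 hs0.2 hs0B).2
    have hBPu : B ⊆ Pu := by
      intro b hb
      obtain ⟨Q, hQ, hbQ⟩ := hblock b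
      obtain ⟨t, ht, _⟩ := hSink Q hQ
      have hvQ : v ∈ Q := (H1 Q hQ b hbQ hb t ht.2 (hnoB t ht.1)).2
      exact (hblock_uniq hQ hPu hvQ hvPu) ▸ hbQ
    obtain ⟨q, hq, hqP⟩ := PeakAux.exists_path_in G (hConn Pu hPu) hvPu hs0.2
    have hA0 : (G.induce (B ∪ {v})).Connected := PeakAux.insert_conn hBconn huB hadj.symm
    have hchain : f (B ∪ {v}) v ≤ f Pu s0 := by
      refine PeakAux.chain hf (hConn Pu hPu) q hq hqP hA0 ?_ (Or.inr rfl) ?_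
      · rintro x (hx | hx)
        · exact hBPu hx
        · rcases hx with rfl; exact hvPu
      · rintro x hx (hxA | hxA)
        · exact absurd hxA (PeakAux.path_avoid_branch hAc hadj q hq hvB hs0B x hx)
        · exact hxA
    exact absurd (hchain.trans (hCost Pu hPu s0 hs0)) (not_le.2 h2)
  obtain ⟨sstar, hsS, hsB⟩ := C0
  have hcard : S'.ncard ≤ S.ncard := by
    have he : S' = insert u (S \ B) := by rw [hS', Set.union_singleton]
    have hsub : S \ B ⊆ S \ {sstar} := by
      rintro x ⟨hx1, hx2⟩
      exact ⟨hx1, fun h => hx2 (by rcases h with rfl; exact hsB)⟩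
    have h2' : (S \ B).ncard ≤ (S \ {sstar}).ncard :=
      Set.ncard_le_ncard hsub (Set.toFinite _)
    have h3' : (S \ {sstar}).ncard = S.ncard - 1 :=
      Set.ncard_diff_singleton_of_mem hsS
    have h4' : 0 < S.ncard := (Set.ncard_pos (Set.toFinite _)).2 ⟨sstar, hsS⟩
    rw [he]
    have := Set.ncard_insert_le u (S \ B)
    omega
  refine ⟨?_, hcard⟩
  -- the block of v and its sink
  obtain ⟨Pv, hPv, hvPv⟩ := hblock v
  obtain ⟨sv, hsv, hsvU⟩ := hSink Pv hPv
  set Keep : Set (Set V) := {P | P ∈ PP ∧ P ∩ B = ∅ ∧ P ≠ Pv} with hKeep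
  have HnotPv : ∀ P ∈ PP, P ≠ Pv → ¬ (P ⊆ B) → P ∩ B = ∅ := by
    intro P hP hne hnsub
    rw [Set.eq_empty_iff_forall_notMem]
    rintro a ⟨haP, haB⟩
    obtain ⟨b, hbP, hbB⟩ := Set.not_subset.1 hnsub
    have hvP : v ∈ P := (H1 P hP a haP haB b hbP hbB).2
    exact hne (hblock_uniq hP hPv hvP hvPv)
  have hKeepSink : ∀ P ∈ Keep, (∃! s, s ∈ S' ∩ P) ∧ (∀ s ∈ S' ∩ P, s ∈ S ∩ P) := by
    intro P hP
    obtain ⟨hPP, hPB, hPne⟩ := hP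
    have huP : u ∉ P := fun h => (Set.eq_empty_iff_forall_notMem.1 hPB u) ⟨h, huB⟩
    obtain ⟨sP, hsP, hsPU⟩ := hSink P hPP
    have hSS : ∀ s ∈ S' ∩ P, s ∈ S ∩ P := by
      rintro s ⟨hs1, hs2⟩
      rcases hs1 with hs1 | hs1
      · exact ⟨hs1.1, hs2⟩
      · rcases hs1 with rfl; exact absurd hs2 huP
    refine ⟨⟨sP, ⟨Or.inl ⟨hsP.1, fun h => (Set.eq_empty_iff_forall_notMem.1 hPB sP) ⟨hsP.2, h⟩⟩, hsP.2⟩, ?_⟩, hSS⟩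
    intro y hy
    exact hsPU y (hSS y hy)
  by_cases hsvB : sv ∈ B
  · -- merge case : B ∪ Pv with sink u
    have huPv : u ∈ Pv := (H1 Pv hPv sv hsv.2 hsvB v hvPv hvB).1
    have hUconn : (G.induce (B ∪ Pv)).Connected :=
      PeakAux.union_conn hBconn (hConn Pv hPv) huB huPv
    have hMuniq : ∀ t ∈ S' ∩ (B ∪ Pv), t = u := by
      rintro t ⟨ht1, ht2⟩
      rcases ht1 with ht1 | ht1
      · rcases ht2 with ht2 | ht2
        · exact absurd ht2 ht1.2
        · have := hsvU t ⟨ht1.1, ht2⟩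
          exact absurd (this ▸ hsvB) ht1.2
      · exact ht1
    -- the crucial cost bound
    have hcost : f (B ∪ Pv) u ≤ T := by
      rw [hf.maxComp (B ∪ Pv) u (Or.inl huB) hUconn]
      refine iSup_le fun w => iSup_le fun hw => ?_
      obtain ⟨hadj_uw, hwU⟩ := hw
      by_cases hwv : w = v
      · rw [hwv]
        set Z := branchIn G (B ∪ Pv) u v with hZdef
        have hZ : Z ⊆ Pv \ B := by
          rintro x ⟨p, hup, hpU⟩
          have hsupB : ∀ t ∈ p.support, t ∉ B := by
            intro t ht htB
            exact hup (p.support_takeUntil_subset ht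
              ((PeakAux.walk_cross' hAc hadj (p.takeUntil t ht) hvB htB).1))
          have hxB : x ∉ B := hsupB x p.end_mem_support
          exact ⟨(hpU x p.end_mem_support).resolve_left hxB, hxB⟩
        have hvZ : v ∈ Z := PeakAux.mem_branchIn_self (Or.inr hvPv) (Ne.symm huv)
        have hZconn : (G.induce Z).Connected :=
          PeakAux.branchIn_conn (Or.inr hvPv) (Ne.symm huv)
        have hZu : (G.induce (Z ∪ {u})).Connected := PeakAux.insert_conn hZconn hvZ hadj
        have hPvBconn : (G.induce (Pv \ B)).Connected :=
          PeakAux.diff_conn hAc hadj (hConn Pv hPv) hvPv hvB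
        have hA0conn : (G.induce ((Pv \ B) ∪ {u})).Connected :=
          PeakAux.insert_conn hPvBconn (⟨hvPv, hvB⟩ : v ∈ Pv \ B) hadj
        have step1 : f (Z ∪ {u}) u ≤ f ((Pv \ B) ∪ {u}) u := by
          refine hf.setMono _ _ _ (Or.inr rfl) ?_ hZu hA0conn
          rintro x (hx | hx)
          · exact Or.inl (hZ hx)
          · exact Or.inr hx
        obtain ⟨q, hq, hqP⟩ := PeakAux.exists_path_in G (hConn Pv hPv) huPv hsv.2
        have hqB : ∀ x ∈ q.support, x ∈ B := PeakAux.path_subset_branch hAc hadj q hq huB hsvB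
        have step2 : f ((Pv \ B) ∪ {u}) u ≤ f Pv sv := by
          refine PeakAux.chain hf (hConn Pv hPv) q hq hqP hA0conn ?_ (Or.inr rfl) ?_
          · rintro x (hx | hx)
            · exact hx.1
            · rcases hx with rfl; exact huPv
          · rintro x hx (hxA | hxA)
            · exact absurd (hqB x hx) hxA.2
            · exact hxA
        exact step1.trans (step2.trans (hCost Pv hPv sv hsv))
      · have hwB : w ∈ B := by
          by_contra hwB
          exact hwv (PeakAux.cross hAc hadj huB hwB hadj_uw).2
        set Z := branchIn G (B ∪ Pv) u w with hZdef
        have hZ : Z ⊆ B := by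
          rintro x ⟨p, hup, hpU⟩
          by_contra hxB
          exact hup (PeakAux.walk_cross hAc hadj p hwB hxB).1
        have hwZ : w ∈ Z := PeakAux.mem_branchIn_self hwU hadj_uw.ne'
        have hZconn : (G.induce Z).Connected := PeakAux.branchIn_conn hwU hadj_uw.ne'
        have hZu : (G.induce (Z ∪ {u})).Connected := PeakAux.insert_conn hZconn hwZ hadj_uw
        have hsub : Z ∪ {u} ⊆ B := by
          rintro x (hx | hx)
          · exact hZ hx
          · rcases hx with rfl; exact huB
        exact (hf.setMono _ _ _ (Or.inr rfl) hsub hZu hBconn).trans h1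
    refine ⟨insert (B ∪ Pv) Keep, ?_, ?_, ?_, ?_, ?_⟩
    · ext x
      simp only [Set.mem_sUnion, Set.mem_univ, iff_true]
      by_cases hxB : x ∈ B
      · exact ⟨B ∪ Pv, Set.mem_insert _ _, Or.inl hxB⟩
      · obtain ⟨P, hP, hxP⟩ := hblock x
        by_cases hPv' : P = Pv
        · exact ⟨B ∪ Pv, Set.mem_insert _ _, Or.inr (hPv' ▸ hxP)⟩
        · have hPB : P ∩ B = ∅ := HnotPv P hP hPv' (fun h => hxB (h hxP))
          exact ⟨P, Set.mem_insert_of_mem _ ⟨hP, hPB, hPv'⟩, hxP⟩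
    · rintro P hP Q hQ hne
      rcases Set.mem_insert_iff.1 hP with rfl | hP <;>
        rcases Set.mem_insert_iff.1 hQ with rfl | hQ
      · exact absurd rfl hne
      · refine Set.disjoint_union_left.2 ⟨?_, ?_⟩
        · exact Set.disjoint_left.2 fun a ha haQ =>
            (Set.eq_empty_iff_forall_notMem.1 hQ.2.1 a) ⟨haQ, ha⟩
        · exact hDisj Pv hPv Q hQ.1 (fun h => hQ.2.2 h.symm)
      · refine (Set.disjoint_union_left.2 ⟨?_, ?_⟩).symm
        · exact Set.disjoint_left.2 fun a ha haQ =>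
            (Set.eq_empty_iff_forall_notMem.1 hP.2.1 a) ⟨haQ, ha⟩
        · exact hDisj Pv hPv P hP.1 (fun h => hP.2.2 h.symm)
      · exact hDisj P hP.1 Q hQ.1 hne
    · rintro P hP
      rcases Set.mem_insert_iff.1 hP with rfl | hP
      · exact hUconn
      · exact hConn P hP.1
    · rintro P hP
      rcases Set.mem_insert_iff.1 hP with rfl | hP
      · exact ⟨u, ⟨Or.inr rfl, Or.inl huB⟩, hMuniq⟩
      · exact (hKeepSink P hP).1
    · rintro P hP s hs
      rcases Set.mem_insert_iff.1 hP with rfl | hP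
      · rw [hMuniq s hs]; exact hcost
      · exact hCost P hP.1 s ((hKeepSink P hP).2 s hs)
  · -- split case : B with sink u, Pv \ B with sink sv
    have hsv' : sv ∈ S' := Or.inl ⟨hsv.1, hsvB⟩
    have hPvBconn : (G.induce (Pv \ B)).Connected :=
      PeakAux.diff_conn hAc hadj (hConn Pv hPv) hvPv hvB
    refine ⟨insert B (insert (Pv \ B) Keep), ?_, ?_, ?_, ?_, ?_⟩
    · ext x
      simp only [Set.mem_sUnion, Set.mem_univ, iff_true]
      by_cases hxB : x ∈ B
      · exact ⟨B, Set.mem_insert _ _, hxB⟩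
      · obtain ⟨P, hP, hxP⟩ := hblock x
        by_cases hPv' : P = Pv
        · refine ⟨Pv \ B, Set.mem_insert_of_mem _ (Set.mem_insert _ _), ?_⟩
          exact ⟨hPv' ▸ hxP, hxB⟩
        · have hPB : P ∩ B = ∅ := HnotPv P hP hPv' (fun h => hxB (h hxP))
          exact ⟨P, Set.mem_insert_of_mem _ (Set.mem_insert_of_mem _ ⟨hP, hPB, hPv'⟩), hxP⟩
    · have dBPv : Disjoint B (Pv \ B) := Set.disjoint_left.2 fun a ha haQ => haQ.2 ha
      have dBK : ∀ Q ∈ Keep, Disjoint B Q := fun Q hQ =>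
        Set.disjoint_left.2 fun a ha haQ =>
          (Set.eq_empty_iff_forall_notMem.1 hQ.2.1 a) ⟨haQ, ha⟩
      have dPvK : ∀ Q ∈ Keep, Disjoint (Pv \ B) Q := fun Q hQ =>
        Set.disjoint_of_subset_left Set.diff_subset
          (hDisj Pv hPv Q hQ.1 (fun h => hQ.2.2 h.symm))
      rintro P hP Q hQ hne
      rcases Set.mem_insert_iff.1 hP with rfl | hP <;>
        rcases Set.mem_insert_iff.1 hQ with rfl | hQ
      · exact absurd rfl hne
      · rcases Set.mem_insert_iff.1 hQ with rfl | hQ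
        · exact dBPv
        · exact dBK Q hQ
      · rcases Set.mem_insert_iff.1 hP with rfl | hP
        · exact dBPv.symm
        · exact (dBK P hP).symm
      · rcases Set.mem_insert_iff.1 hP with rfl | hP <;>
          rcases Set.mem_insert_iff.1 hQ with rfl | hQ
        · exact absurd rfl hne
        · exact dPvK Q hQ
        · exact (dPvK P hP).symm
        · exact hDisj P hP.1 Q hQ.1 hne
    · rintro P hP
      rcases Set.mem_insert_iff.1 hP with rfl | hP
      · exact hBconn
      · rcases Set.mem_insert_iff.1 hP with rfl | hP
        · exact hPvBconn
        · exact hConn P hP.1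
    · rintro P hP
      rcases Set.mem_insert_iff.1 hP with rfl | hP
      · refine ⟨u, ⟨Or.inr rfl, huB⟩, ?_⟩
        rintro t ⟨ht1, ht2⟩
        rcases ht1 with ht1 | ht1
        · exact absurd ht2 ht1.2
        · exact ht1
      · rcases Set.mem_insert_iff.1 hP with rfl | hP
        · refine ⟨sv, ⟨hsv', ⟨hsv.2, hsvB⟩⟩, ?_⟩
          rintro t ⟨ht1, ht2⟩
          rcases ht1 with ht1 | ht1
          · exact hsvU t ⟨ht1.1, ht2.1⟩
          · rcases ht1 with rfl; exact absurd huB ht2.2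
        · exact (hKeepSink P hP).1
    · rintro P hP s hs
      rcases Set.mem_insert_iff.1 hP with rfl | hP
      · have : s = u := by
          rcases hs.1 with hs1 | hs1
          · exact absurd hs.2 hs1.2
          · exact hs1
        rw [this]; exact h1
      · rcases Set.mem_insert_iff.1 hP with rfl | hP
        · have hse : s = sv := by
            rcases hs.1 with hs1 | hs1
            · exact hsvU s ⟨hs1.1, hs.2.1⟩
            · rcases hs1 with rfl; exact absurd huB hs.2.2
          rw [hse]
          refine (hf.setMono _ _ _ (show sv ∈ Pv \ B from ⟨hsv.2, hsvB⟩) Set.diff_subset hPvBconn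
            (hConn Pv hPv)).trans (hCost Pv hPv sv hsv)
        · exact hCost P hP.1 s ((hKeepSink P hP).2 s hs)
end

section
/- (Separation lemma, one direction.) Let T_in=(V_in,E) be a finite tree, f an atomic cost function with max composition, 𝒯 ≥ 0 a threshold, S_out ⊆ V_in, s ∈ S_out, u a neighbor of s, and V′ := V_{−s}(u) ∪ {s}. Suppose there exists S₁* ⊆ V_in with S_out ⊆ S₁*, |S₁*| ≤ k, and a partition 𝒫* of V_in into connected blocks each containing exactly one sink of S₁* with all block costs ≤ 𝒯. Then setting S₂* := (S₁* ∩ (V_in \ V′)) ∪ {s}, the vertex set (V_in \ V′) ∪ {s} can be partitioned into connected blocks each containing exactly one element of S₂* with all block costs ≤ 𝒯. -/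
open scoped ENNReal Classical

variable {V : Type*}

section Aux

variable {G : SimpleGraph V}

private lemma aux_not_mem_branch_self (s u : V) : s ∉ branch G s u := by
  rintro ⟨p, hp, -⟩
  exact hp p.end_mem_support

/-- Vertices on an `s`-avoiding walk starting in the branch stay in the branch. -/
private lemma aux_branch_walk {s u x y : V} (hx : x ∈ branch G s u) (w : G.Walk x y)
    (hw : s ∉ w.support) : ∀ z ∈ w.support, z ∈ branch G s u := by
  intro z hz
  obtain ⟨p, hp, -⟩ := hx
  refine ⟨p.append (w.takeUntil z hz), ?_, fun _ _ => Set.mem_univ _⟩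
  rw [SimpleGraph.Walk.mem_support_append_iff]
  rintro (h | h)
  · exact hp h
  · exact hw (w.support_takeUntil_subset hz h)

private lemma aux_branch_walk_not {s u x y : V} (hx : x ∉ branch G s u) (w : G.Walk x y)
    (hw : s ∉ w.support) : ∀ z ∈ w.support, z ∉ branch G s u := by
  intro z hz hzB
  have hs' : s ∉ (w.takeUntil z hz).reverse.support := by
    rw [SimpleGraph.Walk.support_reverse]
    intro h
    exact hw (w.support_takeUntil_subset hz (List.mem_reverse.mp h))
  exact hx (aux_branch_walk hzB ((w.takeUntil z hz).reverse) hs' x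
    (SimpleGraph.Walk.end_mem_support _))

/-- A walk from inside the branch to outside it must pass through `s`. -/
private lemma aux_crossing {s u x y : V} (w : G.Walk x y) (hx : x ∈ branch G s u)
    (hy : y ∉ branch G s u) : s ∈ w.support := by
  by_contra hsw
  exact hy (aux_branch_walk hx w hsw y w.end_mem_support)

/-- For a path, the end vertex does not appear in a proper initial segment. -/
private lemma aux_end_not_mem_takeUntil {a b y : V} (p : G.Walk a b) (hp : p.IsPath)
    (hy : y ∈ p.support) (hne : y ≠ b) : b ∉ (p.takeUntil y hy).support := by
  intro hb
  have hspec := p.take_spec hy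
  have hnodup : p.support.Nodup := hp.support_nodup
  rw [← hspec, SimpleGraph.Walk.support_append, List.nodup_append] at hnodup
  have hbtail : b ∈ (p.dropUntil y hy).support.tail := by
    have hbend : b ∈ (p.dropUntil y hy).support := SimpleGraph.Walk.end_mem_support _
    rw [SimpleGraph.Walk.support_eq_cons] at hbend
    rcases List.mem_cons.mp hbend with h | h
    · exact absurd h.symm hne
    · exact h
  exact hnodup.2.2 b hb b hbtail rfl

private lemma aux_reach_induce {P : Set V} :
    ∀ {x y : V} (w : G.Walk x y) (_ : ∀ z ∈ w.support, z ∈ P) (hx : x ∈ P) (hy : y ∈ P),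
      (G.induce P).Reachable ⟨x, hx⟩ ⟨y, hy⟩ := by
  intro x y w
  induction w with
  | nil => intro _ hx hy; exact SimpleGraph.Reachable.refl _
  | @cons a c b hac q ih =>
    intro h hx hy
    have hc : c ∈ P := h c (by simp [SimpleGraph.Walk.support_cons])
    have h1 : (G.induce P).Adj ⟨a, hx⟩ ⟨c, hc⟩ := by simpa using hac
    exact h1.reachable.trans
      (ih (fun z hz => h z (by simp [SimpleGraph.Walk.support_cons, hz])) hc hy)

private lemma aux_induce_connected_of_walks {P : Set V} (hne : P.Nonempty)
    (h : ∀ x ∈ P, ∀ y ∈ P, ∃ w : G.Walk x y, ∀ z ∈ w.support, z ∈ P) :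
    (G.induce P).Connected := by
  obtain ⟨v, hv⟩ := hne
  haveI : Nonempty ↥P := ⟨⟨v, hv⟩⟩
  refine ⟨fun a b => ?_⟩
  obtain ⟨w, hw⟩ := h a.1 a.2 b.1 b.2
  exact aux_reach_induce w hw a.2 b.2

private lemma aux_walk_of_induce {P : Set V} :
    ∀ {a b : ↥P} (_ : (G.induce P).Walk a b),
      ∃ w' : G.Walk a.1 b.1, ∀ z ∈ w'.support, z ∈ P := by
  intro a b w
  induction w with
  | nil =>
    refine ⟨SimpleGraph.Walk.nil, ?_⟩
    rintro z hz
    simp at hz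
    subst hz
    exact Subtype.coe_prop _
  | @cons a c b hac q ih =>
    obtain ⟨w', hw'⟩ := ih
    refine ⟨SimpleGraph.Walk.cons (by simpa using hac) w', ?_⟩
    intro z hz
    rw [SimpleGraph.Walk.support_cons, List.mem_cons] at hz
    rcases hz with rfl | hz
    · exact a.2
    · exact hw' z hz

private lemma aux_exists_walk_of_induce_connected {P : Set V}
    (hc : (G.induce P).Connected) {x y : V} (hx : x ∈ P) (hy : y ∈ P) :
    ∃ w : G.Walk x y, ∀ z ∈ w.support, z ∈ P := by
  obtain ⟨w⟩ := hc.preconnected ⟨x, hx⟩ ⟨y, hy⟩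
  exact aux_walk_of_induce w

end Aux

/-- separation lemma, one direction: if a feasible `S₁*`
extending `S_out` exists for the whole tree, then
`S₂* = (S₁* ∩ (V \ V')) ∪ {s}` is feasible on `(V \ V') ∪ {s}`,
where `V' = V_{-s}(u) ∪ {s}`. -/
theorem stmt_8 [Fintype V] (G : SimpleGraph V) (hG : G.IsTree)
    (f : Set V → V → ℝ≥0∞) (hf : AtomicCost G f) (T : ℝ≥0∞) (k : ℕ)
    (Sout S₁ : Set V) (s u : V) (hs : s ∈ Sout) (hadj : G.Adj s u)
    (hsub : Sout ⊆ S₁) (hcard : S₁.ncard ≤ k)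
    (hfeas : FeasibleOn G f T Set.univ S₁) :
    FeasibleOn G f T ((Set.univ \ (branch G s u ∪ {s})) ∪ {s})
      ((S₁ ∩ (Set.univ \ (branch G s u ∪ {s}))) ∪ {s}) := by
  classical
  set B : Set V := branch G s u with hBdef
  have hsB : s ∉ B := aux_not_mem_branch_self s u
  have hA : (Set.univ \ (B ∪ {s})) ∪ {s} = Bᶜ := by
    ext z
    by_cases hz : z = s
    · subst hz; simp [hsB]
    · simp [hz]
  have hS₂mem : ∀ z, z ∈ (S₁ ∩ (Set.univ \ (B ∪ {s}))) ∪ {s} ↔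
      (z ∈ S₁ ∧ z ∉ B ∧ z ≠ s) ∨ z = s := by
    intro z; simp [Set.mem_diff]; tauto
  rw [hA]
  obtain ⟨PP, hcov, hdis, hcon, hsink, hcost⟩ := hfeas
  have hsPP : ∃ P ∈ PP, s ∈ P := by
    have : s ∈ ⋃₀ PP := by rw [hcov]; trivial
    simpa using this
  obtain ⟨P₀, hP₀PP, hsP₀⟩ := hsPP
  have huniqP₀ : ∀ P ∈ PP, s ∈ P → P = P₀ := by
    intro P hP hsP
    by_contra hne
    exact (hdis P hP P₀ hP₀PP hne).ne_of_mem hsP hsP₀ rfl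
  -- s is the unique S₁-sink of P₀
  have hs_sink : ∀ z ∈ S₁ ∩ P₀, z = s := by
    intro z hz
    obtain ⟨t, -, htu⟩ := hsink P₀ hP₀PP
    exact (htu z hz).trans (htu s ⟨hsub hs, hsP₀⟩).symm
  -- blocks not containing s that meet Bᶜ lie in Bᶜ
  have hPsub : ∀ P ∈ PP, s ∉ P → ∀ x ∈ P, x ∉ B → P ⊆ Bᶜ := by
    intro P hP hsP x hx hxB z hz
    intro hzB
    obtain ⟨w, hw⟩ := aux_exists_walk_of_induce_connected (hcon P hP) hz hx
    exact hsP (hw s (aux_crossing w hzB hxB))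
  -- every vertex of P₀ ∩ Bᶜ is joined to s by a walk inside P₀ ∩ Bᶜ
  have K : ∀ x ∈ P₀ ∩ Bᶜ, ∃ w : G.Walk x s, ∀ z ∈ w.support, z ∈ P₀ ∩ Bᶜ := by
    rintro x ⟨hxP, hxB⟩
    obtain ⟨w₀, hw₀⟩ := aux_exists_walk_of_induce_connected (hcon P₀ hP₀PP) hxP hsP₀
    refine ⟨w₀.bypass, fun z hz => ⟨hw₀ z (w₀.support_bypass_subset hz), ?_⟩⟩
    by_cases hzs : z = s
    · subst hzs; exact hsB
    · have hsnot : s ∉ (w₀.bypass.takeUntil z hz).support :=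
        aux_end_not_mem_takeUntil w₀.bypass w₀.bypass_isPath hz hzs
      exact aux_branch_walk_not hxB (w₀.bypass.takeUntil z hz) hsnot z
        (SimpleGraph.Walk.end_mem_support _)
  have hsP₀' : s ∈ P₀ ∩ Bᶜ := ⟨hsP₀, hsB⟩
  have hP₀'conn : (G.induce (P₀ ∩ Bᶜ)).Connected := by
    refine aux_induce_connected_of_walks ⟨s, hsP₀'⟩ ?_
    intro x hx y hy
    obtain ⟨wx, hwx⟩ := K x hx
    obtain ⟨wy, hwy⟩ := K y hy
    refine ⟨wx.append wy.reverse, ?_⟩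
    intro z hz
    rw [SimpleGraph.Walk.mem_support_append_iff] at hz
    rcases hz with hz | hz
    · exact hwx z hz
    · rw [SimpleGraph.Walk.support_reverse, List.mem_reverse] at hz
      exact hwy z hz
  -- the new partition
  refine ⟨{P | P ∈ PP ∧ s ∉ P ∧ P ⊆ Bᶜ} ∪ {P₀ ∩ Bᶜ}, ?_, ?_, ?_, ?_, ?_⟩
  · -- covers Bᶜ
    ext x
    simp only [Set.mem_sUnion, Set.mem_union, Set.mem_setOf_eq, Set.mem_singleton_iff]
    constructor
    · rintro ⟨P, (⟨hP, hsP, hPB⟩ | rfl), hxP⟩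
      · exact hPB hxP
      · exact hxP.2
    · intro hxB
      have hxu : x ∈ ⋃₀ PP := by rw [hcov]; trivial
      obtain ⟨P, hP, hxP⟩ := hxu
      by_cases hsP : s ∈ P
      · exact ⟨P₀ ∩ Bᶜ, Or.inr rfl, by rw [← huniqP₀ P hP hsP]; exact ⟨hxP, hxB⟩⟩
      · exact ⟨P, Or.inl ⟨hP, hsP, hPsub P hP hsP x hxP hxB⟩, hxP⟩
  · -- pairwise disjoint
    rintro P (⟨hP, hsP, -⟩ | rfl) Q (⟨hQ, hsQ, -⟩ | rfl) hne
    · exact hdis P hP Q hQ hne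
    · have : P ≠ P₀ := fun h => hsP (h ▸ hsP₀)
      exact (hdis P hP P₀ hP₀PP this).mono_right Set.inter_subset_left
    · have : Q ≠ P₀ := fun h => hsQ (h ▸ hsP₀)
      exact ((hdis Q hQ P₀ hP₀PP this).mono_right Set.inter_subset_left).symm
    · exact absurd rfl hne
  · -- connected
    rintro P (⟨hP, -, -⟩ | rfl)
    · exact hcon P hP
    · exact hP₀'conn
  · -- unique sink
    rintro P (⟨hP, hsP, hPB⟩ | rfl)
    · obtain ⟨t, ⟨htS, htP⟩, htu⟩ := hsink P hP
      refine ⟨t, ⟨?_, htP⟩, ?_⟩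
      · exact (hS₂mem t).mpr (Or.inl ⟨htS, hPB htP, fun h => hsP (h ▸ htP)⟩)
      · rintro z ⟨hz1, hz2⟩
        rcases (hS₂mem z).mp hz1 with ⟨hz3, -, -⟩ | rfl
        · exact htu z ⟨hz3, hz2⟩
        · exact absurd hz2 hsP
    · refine ⟨s, ⟨(hS₂mem s).mpr (Or.inr rfl), hsP₀'⟩, ?_⟩
      rintro z ⟨hz1, hz2⟩
      rcases (hS₂mem z).mp hz1 with ⟨hz3, -, -⟩ | rfl
      · exact hs_sink z ⟨hz3, hz2.1⟩
      · rfl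
  · -- costs
    rintro P (⟨hP, hsP, hPB⟩ | rfl) t ⟨ht1, ht2⟩
    · rcases (hS₂mem t).mp ht1 with ⟨ht3, -, -⟩ | rfl
      · exact hcost P hP t ⟨ht3, ht2⟩
      · exact absurd ht2 hsP
    · have hts : t = s := by
        rcases (hS₂mem t).mp ht1 with ⟨ht3, -, -⟩ | rfl
        · exact hs_sink t ⟨ht3, ht2.1⟩
        · rfl
      subst hts
      calc f (P₀ ∩ Bᶜ) t ≤ f P₀ t :=
            hf.setMono (P₀ ∩ Bᶜ) P₀ t hsP₀' Set.inter_subset_left hP₀'conn (hcon P₀ hP₀PP)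
        _ ≤ T := hcost P₀ hP₀PP t ⟨hsub hs, hsP₀⟩
end

section
/- (Recursive self-sufficiency propagation.) Let T′ be a rooted subtree with root v of an RC-viable tree T with sink set S placed at leaves. Suppose u is a child of v lying in the hub tree, T_{−v}(u) is recursively self-sufficient, and there is a sink s ∈ S ∩ V_{−v}(u) with f(BP(v,s), s) ≤ 𝒯. If additionally every child u′ of v in the hub tree satisfies that T_{−v}(u′) is recursively self-sufficient, then T′ itself is recursively self-sufficient (in particular self-sufficient: its vertex set can be partitioned into connected blocks, each containing one sink of S ∩ V(T′) with cost ≤ 𝒯). -/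
open scoped ENNReal Classical

variable {V : Type*}

namespace TreeHelp

open SimpleGraph

variable {G : SimpleGraph V}


noncomputable def tp (hG : G.IsTree) (a b : V) : G.Walk a b :=
  (hG.existsUnique_path a b).choose

lemma tp_isPath (hG : G.IsTree) (a b : V) : (tp hG a b).IsPath :=
  (hG.existsUnique_path a b).choose_spec.1

lemma tp_eq (hG : G.IsTree) {a b : V} (p : G.Walk a b) (hp : p.IsPath) :
    p = tp hG a b :=
  (hG.existsUnique_path a b).choose_spec.2 p hp

lemma pathSet_eq_support (hG : G.IsTree) (a b : V) :
    pathSet G a b = {x | x ∈ (tp hG a b).support} := by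
  ext x
  constructor
  · rintro ⟨⟨p, hp⟩, hx⟩
    have hx' : x ∈ p.support := hx
    rw [tp_eq hG p hp] at hx'
    exact hx'
  · intro hx
    exact ⟨⟨tp hG a b, tp_isPath hG a b⟩, hx⟩

lemma tp_length (hG : G.IsTree) (a b : V) :
    (tp hG a b).length = G.dist a b := by
  refine le_antisymm ?_ (SimpleGraph.dist_le _)
  obtain ⟨p, hp⟩ := (hG.isConnected a b).exists_walk_length_eq_dist
  calc (tp hG a b).length = p.bypass.length := by
        rw [tp_eq hG p.bypass p.bypass_isPath]
    _ ≤ p.length := p.length_bypass_le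
    _ = G.dist a b := hp

lemma mem_pathSet_iff (hG : G.IsTree) {a b x : V} :
    x ∈ pathSet G a b ↔ G.dist a x + G.dist x b = G.dist a b := by
  constructor
  · intro hx
    rw [pathSet_eq_support hG] at hx
    have hsplit := congrArg Walk.length ((tp hG a b).take_spec hx)
    rw [Walk.length_append, tp_length hG a b] at hsplit
    have hlen := hsplit
    have h1 : G.dist a x ≤ ((tp hG a b).takeUntil x hx).length :=
      SimpleGraph.dist_le _
    have h2 : G.dist x b ≤ ((tp hG a b).dropUntil x hx).length :=
      SimpleGraph.dist_le _
    have h3 : G.dist a b ≤ G.dist a x + G.dist x b :=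
      hG.isConnected.dist_triangle
    omega
  · intro h
    have hq : ((tp hG a x).append (tp hG x b)).length = G.dist a b := by
      rw [Walk.length_append, tp_length hG, tp_length hG, h]
    have hqp : ((tp hG a x).append (tp hG x b)).IsPath := by
      apply Walk.isPath_of_length_eq_dist
      rw [hq]
    have := tp_eq hG _ hqp
    rw [pathSet_eq_support hG]
    show x ∈ (tp hG a b).support
    rw [← this, Walk.mem_support_append_iff]
    exact Or.inl (Walk.end_mem_support _)

lemma mem_left (hG : G.IsTree) (a b : V) : a ∈ pathSet G a b := by
  rw [mem_pathSet_iff hG, SimpleGraph.dist_self]; omega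

lemma mem_right (hG : G.IsTree) (a b : V) : b ∈ pathSet G a b := by
  rw [mem_pathSet_iff hG, SimpleGraph.dist_self]; omega

lemma pathSet_comm (hG : G.IsTree) (a b : V) :
    pathSet G a b = pathSet G b a := by
  ext x
  rw [mem_pathSet_iff hG, mem_pathSet_iff hG]
  have e1 : G.dist a x = G.dist x a := SimpleGraph.dist_comm
  have e2 : G.dist x b = G.dist b x := SimpleGraph.dist_comm
  have e3 : G.dist a b = G.dist b a := SimpleGraph.dist_comm
  omega

lemma dist_zero (hG : G.IsTree) {a b : V} : G.dist a b = 0 ↔ a = b :=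
  hG.isConnected.dist_eq_zero_iff

lemma pathSet_self (hG : G.IsTree) (a : V) : pathSet G a a = {a} := by
  ext x
  rw [mem_pathSet_iff hG, SimpleGraph.dist_self]
  constructor
  · intro h
    have : G.dist a x = 0 := by omega
    exact Set.mem_singleton_iff.2 ((dist_zero hG).1 this).symm
  · rintro rfl; simp [SimpleGraph.dist_self]

lemma tripod (hG : G.IsTree) (a b c : V) :
    pathSet G a b ⊆ pathSet G a c ∪ pathSet G c b := by
  intro x hx
  set q := (tp hG a c).append (tp hG c b) with hq
  have hbp : q.bypass = tp hG a b := tp_eq hG _ q.bypass_isPath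
  have hx' : x ∈ q.support := by
    apply q.support_bypass_subset
    rw [hbp]
    rw [pathSet_eq_support hG] at hx
    exact hx
  rw [Walk.mem_support_append_iff] at hx'
  rcases hx' with h | h
  · exact Or.inl (by rw [pathSet_eq_support hG]; exact h)
  · exact Or.inr (by rw [pathSet_eq_support hG]; exact h)

lemma btw_sub (hG : G.IsTree) {a b x : V} (hx : x ∈ pathSet G a b) :
    pathSet G a x ⊆ pathSet G a b := by
  intro y hy
  rw [mem_pathSet_iff hG] at *
  have t1 : G.dist a b ≤ G.dist a y + G.dist y b := hG.isConnected.dist_triangle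
  have t2 : G.dist y b ≤ G.dist y x + G.dist x b := hG.isConnected.dist_triangle
  omega

lemma btw_sub' (hG : G.IsTree) {a b x : V} (hx : x ∈ pathSet G a b) :
    pathSet G x b ⊆ pathSet G a b := by
  rw [pathSet_comm hG x b, pathSet_comm hG a b]
  exact btw_sub hG (by rwa [pathSet_comm hG] at hx)

lemma adj_dist_one (hG : G.IsTree) {a b : V} (h : G.Adj a b) : G.dist a b = 1 :=
  SimpleGraph.dist_eq_one_iff_adj.2 h

lemma pathSet_adj (hG : G.IsTree) {a b : V} (h : G.Adj a b) :
    pathSet G a b = {a, b} := by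
  ext x
  rw [mem_pathSet_iff hG, adj_dist_one hG h]
  constructor
  · intro hx
    rcases Nat.le_one_iff_eq_zero_or_eq_one.1 (show G.dist a x ≤ 1 by omega) with h0 | h1
    · exact Or.inl ((dist_zero hG).1 h0).symm
    · have : G.dist x b = 0 := by omega
      exact Or.inr ((dist_zero hG).1 this)
  · rintro (rfl | rfl)
    · simp [SimpleGraph.dist_self, adj_dist_one hG h]
    · simp [SimpleGraph.dist_self, adj_dist_one hG h]

lemma mid2 (hG : G.IsTree) {a b y z : V}
    (h1 : b ∈ pathSet G a y) (h2 : z ∈ pathSet G b y) :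
    b ∈ pathSet G a z := by
  rw [mem_pathSet_iff hG] at *
  have t1 : G.dist a y ≤ G.dist a z + G.dist z y := hG.isConnected.dist_triangle
  have t2 : G.dist a z ≤ G.dist a b + G.dist b z := hG.isConnected.dist_triangle
  have t3 : G.dist z y = G.dist y z := SimpleGraph.dist_comm
  omega

lemma chain (hG : G.IsTree) {ρ v η y : V}
    (h1 : v ∈ pathSet G ρ η) (h2 : η ∈ pathSet G ρ y) :
    η ∈ pathSet G v y := by
  rw [mem_pathSet_iff hG] at *
  have t1 : G.dist v y ≤ G.dist v η + G.dist η y := hG.isConnected.dist_triangle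
  have t2 : G.dist ρ y ≤ G.dist ρ v + G.dist v y := hG.isConnected.dist_triangle
  omega

lemma compose (hG : G.IsTree) {ρ v w z : V}
    (h1 : v ∈ pathSet G ρ w) (h2 : w ∈ pathSet G ρ z) :
    v ∈ pathSet G ρ z := by
  rw [mem_pathSet_iff hG] at *
  have t1 : G.dist v z ≤ G.dist v w + G.dist w z := hG.isConnected.dist_triangle
  have t2 : G.dist ρ z ≤ G.dist ρ v + G.dist v z := hG.isConnected.dist_triangle
  omega

lemma exists_second (hG : G.IsTree) {a b : V} (h : a ≠ b) :
    ∃ x, G.Adj a x ∧ x ∈ pathSet G a b := by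
  obtain ⟨w, hadj, p', hp⟩ := Walk.exists_eq_cons_of_ne h (tp hG a b)
  refine ⟨w, hadj, ?_⟩
  rw [pathSet_eq_support hG]
  show w ∈ (tp hG a b).support
  rw [hp, Walk.support_cons]
  exact List.mem_cons_of_mem _ (Walk.start_mem_support p')


lemma mem_branch_iff (hG : G.IsTree) {v n x : V} :
    x ∈ branch G v n ↔ v ∉ pathSet G n x := by
  constructor
  · rintro ⟨p, hpv, -⟩ hv
    rw [pathSet_eq_support hG, ← tp_eq hG p.bypass p.bypass_isPath] at hv
    exact hpv (p.support_bypass_subset hv)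
  · intro hv
    refine ⟨tp hG n x, ?_, fun y _ => Set.mem_univ y⟩
    rw [pathSet_eq_support hG] at hv
    exact hv

lemma branch_self (hG : G.IsTree) {v n : V} (h : G.Adj v n) : n ∈ branch G v n := by
  rw [mem_branch_iff hG]
  rw [pathSet_self hG]
  exact fun hv => h.ne' (Set.mem_singleton_iff.1 hv).symm

lemma mem_branch_ne (hG : G.IsTree) {v n x : V} (hx : x ∈ branch G v n) : x ≠ v := by
  rintro rfl
  rw [mem_branch_iff hG] at hx
  exact hx (mem_right hG n x)

lemma branch_eq_pathSet (hG : G.IsTree) {v n x : V} (h : G.Adj v n) :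
    x ∈ branch G v n ↔ n ∈ pathSet G v x := by
  rw [mem_branch_iff hG]
  constructor
  · intro hv
    have hvsup : v ∉ (tp hG n x).support := by
      rw [pathSet_eq_support hG] at hv
      exact hv
    have hp : (Walk.cons h (tp hG n x)).IsPath :=
      (Walk.cons_isPath_iff h _).2 ⟨tp_isPath hG n x, hvsup⟩
    rw [pathSet_eq_support hG]
    show n ∈ (tp hG v x).support
    rw [← tp_eq hG _ hp, Walk.support_cons]
    exact List.mem_cons_of_mem _ (Walk.start_mem_support _)
  · intro hn hv
    rw [mem_pathSet_iff hG] at hn hv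
    have e1 : G.dist v n = 1 := adj_dist_one hG h
    have e2 : G.dist n v = 1 := adj_dist_one hG h.symm
    omega

lemma second_unique (hG : G.IsTree) {v a b x : V} (ha : G.Adj v a) (hb : G.Adj v b)
    (h1 : a ∈ pathSet G v x) (h2 : b ∈ pathSet G v x) : a = b := by
  rcases tripod hG v x a h2 with h | h
  · rw [mem_pathSet_iff hG] at h
    have e1 : G.dist v a = 1 := adj_dist_one hG ha
    have e2 : G.dist v b = 1 := adj_dist_one hG hb
    have : G.dist b a = 0 := by omega
    exact ((dist_zero hG).1 this).symm
  · rw [mem_pathSet_iff hG] at h h1 h2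
    have e1 : G.dist v a = 1 := adj_dist_one hG ha
    have e2 : G.dist v b = 1 := adj_dist_one hG hb
    have : G.dist a b = 0 := by omega
    exact (dist_zero hG).1 this

lemma sep (hG : G.IsTree) {v n a b : V} (ha : a ∈ branch G v n)
    (hb : b ∉ branch G v n) : v ∈ pathSet G a b := by
  by_contra hvab
  apply hb
  rw [mem_branch_iff hG] at ha ⊢
  intro hv
  rcases tripod hG n b a hv with h | h
  · exact ha h
  · exact hvab h

lemma induce_reach {A : Set V} {a b : V} (p : G.Walk a b) (ha : a ∈ A) (hb : b ∈ A)
    (hsup : ∀ z ∈ p.support, z ∈ A) :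
    (G.induce A).Reachable ⟨a, ha⟩ ⟨b, hb⟩ := by
  induction p with
  | nil => exact Reachable.refl _
  | @cons a c b h q ih =>
    have hc : c ∈ A := hsup _ (by
      rw [Walk.support_cons]
      exact List.mem_cons_of_mem _ (Walk.start_mem_support q))
    have hstep : (G.induce A).Adj ⟨a, ha⟩ ⟨c, hc⟩ := h
    exact hstep.reachable.trans
      (ih hc hb (fun z hz => hsup z (by
        rw [Walk.support_cons]
        exact List.mem_cons_of_mem _ hz)))

lemma induce_connected (hG : G.IsTree) {A : Set V} {a : V} (ha : a ∈ A)
    (hcl : ∀ x ∈ A, pathSet G a x ⊆ A) : (G.induce A).Connected := by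
  have hne : Nonempty ↑A := ⟨⟨a, ha⟩⟩
  refine ⟨fun x y => ?_⟩
  obtain ⟨x, hx⟩ := x
  obtain ⟨y, hy⟩ := y
  have r1 : (G.induce A).Reachable ⟨a, ha⟩ ⟨x, hx⟩ :=
    induce_reach (tp hG a x) ha hx (fun z hz =>
      hcl x hx (by rw [pathSet_eq_support hG]; exact hz))
  have r2 : (G.induce A).Reachable ⟨a, ha⟩ ⟨y, hy⟩ :=
    induce_reach (tp hG a y) ha hy (fun z hz =>
      hcl y hy (by rw [pathSet_eq_support hG]; exact hz))
  exact r1.symm.trans r2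

lemma singleton_connected (hG : G.IsTree) (v : V) :
    (G.induce {v}).Connected := by
  refine induce_connected hG (Set.mem_singleton v) ?_
  intro x hx
  rcases hx with rfl
  rw [pathSet_self hG]

lemma mem_hubSet_iff {S : Set V} {z : V} :
    z ∈ hubSet G S ↔ ∃ s₁ ∈ S, ∃ s₂ ∈ S, z ∈ pathSet G s₁ s₂ := by
  simp [hubSet]

lemma mem_BP_iff {S : Set V} {v s y : V} :
    y ∈ BP G S v s ↔ y ∈ pathSet G v s ∨
      ∃ w ∈ pathSet G v s, ∃ η, (G.Adj w η ∧ η ∉ hubSet G S) ∧ y ∈ branch G w η := by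
  simp only [BP, Set.mem_union, Set.mem_iUnion, Set.mem_setOf_eq, exists_prop]

end TreeHelp

/-- Auxiliary: the trimmed block `BP ∩ descend`. -/
def P0set (G : SimpleGraph V) (S : Set V) (ρ v s : V) : Set V :=
  BP G S v s ∩ descend G ρ v

/-- Auxiliary: hub neighbours of the trimmed block below `v`. -/
def Nset (G : SimpleGraph V) (S : Set V) (ρ v s : V) : Set V :=
  {η | η ∈ hubSet G S ∧ η ∉ P0set G S ρ v s ∧ v ∈ pathSet G ρ η ∧
    ∃ x ∈ P0set G S ρ v s, G.Adj x η}

lemma mem_P0set {G : SimpleGraph V} {S : Set V} {ρ v s y : V} :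
    y ∈ P0set G S ρ v s ↔ y ∈ BP G S v s ∧ v ∈ pathSet G ρ y := Iff.rfl

lemma mem_Nset {G : SimpleGraph V} {S : Set V} {ρ v s η : V} :
    η ∈ Nset G S ρ v s ↔ η ∈ hubSet G S ∧ η ∉ P0set G S ρ v s ∧
      v ∈ pathSet G ρ η ∧ ∃ x ∈ P0set G S ρ v s, G.Adj x η := Iff.rfl

lemma mem_descend {G : SimpleGraph V} {ρ x y : V} :
    y ∈ descend G ρ x ↔ x ∈ pathSet G ρ y := Iff.rfl

/-- recursive self-sufficiency propagation: in an RC-viable tree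
rooted at `ρ`, if the child `u` of `v` lies in the hub tree, `T_{-v}(u)` is
recursively self-sufficient, some sink `s ∈ S ∩ V_{-v}(u)` satisfies
`f (BP(v,s)) s ≤ T`, and every hub-tree child of `v` gives a recursively
self-sufficient subtree, then the subtree rooted at `v` is recursively
self-sufficient. -/
theorem stmt_9 [Fintype V] (G : SimpleGraph V) (hG : G.IsTree)
    (f : Set V → V → ℝ≥0∞) (hf : AtomicCost G f) (T : ℝ≥0∞)
    (S : Set V) (hleaf : ∀ s ∈ S, ∃! u : V, G.Adj s u)
    (hRC : RCviable G f T S)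
    (ρ v u : V)
    (hchild : G.Adj v u) (hdesc : v ∈ pathSet G ρ u)
    (huhub : u ∈ hubSet G S)
    (hrec : RecSS G f T S ρ u)
    (s : V) (hsink : s ∈ S ∩ branch G v u)
    (hbp : f (BP G S v s) s ≤ T)
    (hall : ∀ u' : V, G.Adj v u' → v ∈ pathSet G ρ u' → u' ∈ hubSet G S →
      RecSS G f T S ρ u') :
    RecSS G f T S ρ v := by
  classical
  have hcon : G.Connected := hG.isConnected
  have hsS : s ∈ S := hsink.1
  have hus : u ∈ pathSet G v s := (TreeHelp.branch_eq_pathSet hG hchild).1 hsink.2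
  -- Part 1: the claim for hub vertices strictly below `v`.
  have SSne : ∀ w, w ∈ hubSet G S → v ∈ pathSet G ρ w → w ≠ v →
      SelfSuff G f T S (descend G ρ w) := by
    intro w hwhub hwd hwv
    obtain ⟨u', hadj', hu'w⟩ := TreeHelp.exists_second hG (show v ≠ w from fun h => hwv h.symm)
    have hvρu' : v ∈ pathSet G ρ u' := TreeHelp.mid2 hG hwd hu'w
    have hu'ρw : u' ∈ pathSet G ρ w := TreeHelp.btw_sub' hG hwd hu'w
    by_cases hu'u : u' = u
    · subst hu'u
      exact hrec w hwhub hu'ρw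
    · have hkey : ∀ t, t ∈ S → u' ∈ pathSet G v t → u' ∈ hubSet G S := by
        intro t htS hvt
        have htbr : t ∈ branch G v u' := (TreeHelp.branch_eq_pathSet hG hadj').2 hvt
        have hsbr : s ∉ branch G v u' := by
          intro hs'
          exact hu'u (TreeHelp.second_unique hG hadj' hchild
            ((TreeHelp.branch_eq_pathSet hG hadj').1 hs') hus)
        have hvts : v ∈ pathSet G t s := TreeHelp.sep hG htbr hsbr
        have hu'ts : u' ∈ pathSet G t s := by
          apply TreeHelp.btw_sub hG hvts
          rw [TreeHelp.pathSet_comm hG]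
          exact hvt
        exact TreeHelp.mem_hubSet_iff.2 ⟨t, htS, s, hsS, hu'ts⟩
      obtain ⟨s₁, hs₁, s₂, hs₂, hw12⟩ := TreeHelp.mem_hubSet_iff.1 hwhub
      have hwbr : w ∈ branch G v u' := (TreeHelp.branch_eq_pathSet hG hadj').2 hu'w
      have hcases : u' ∈ pathSet G v s₁ ∨ u' ∈ pathSet G v s₂ := by
        by_contra hcon2
        push_neg at hcon2
        have h1 : s₁ ∉ branch G v u' :=
          fun h => hcon2.1 ((TreeHelp.branch_eq_pathSet hG hadj').1 h)
        have h2 : s₂ ∉ branch G v u' :=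
          fun h => hcon2.2 ((TreeHelp.branch_eq_pathSet hG hadj').1 h)
        have hv1 : v ∈ pathSet G s₁ w := by
          rw [TreeHelp.pathSet_comm hG]; exact TreeHelp.sep hG hwbr h1
        have hv2 : v ∈ pathSet G s₂ w := by
          rw [TreeHelp.pathSet_comm hG]; exact TreeHelp.sep hG hwbr h2
        rw [TreeHelp.mem_pathSet_iff hG] at hv1 hv2 hw12
        have t1 : G.dist s₁ s₂ ≤ G.dist s₁ v + G.dist v s₂ := hcon.dist_triangle
        have c2 : G.dist v s₂ = G.dist s₂ v := SimpleGraph.dist_comm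
        have c3 : G.dist w s₂ = G.dist s₂ w := SimpleGraph.dist_comm
        have hvw : G.dist v w = 0 := by omega
        exact hwv ((TreeHelp.dist_zero hG).1 hvw).symm
      have hu'hub : u' ∈ hubSet G S := by
        rcases hcases with h | h
        · exact hkey s₁ hs₁ h
        · exact hkey s₂ hs₂ h
      exact hall u' hadj' hvρu' hu'hub w hwhub hu'ρw
  intro w hwhub hwd
  have hwd' : v ∈ pathSet G ρ w := hwd
  by_cases hwv : w = v
  · rw [hwv] at hwhub
    rw [hwv]
    -- Now the hub vertex is `w` itself (renamed: `v := w` eliminated, so here w = v).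
    by_cases hvS : v ∈ S
    · -- `v` is a sink; then it is a leaf and `ρ = v`.
      obtain ⟨n₀, hn₀adj, hn₀⟩ := hleaf v hvS
      have huniqnb : ∀ y, G.Adj v y → y = u := fun y hy => (hn₀ y hy).trans (hn₀ u hchild).symm
      have hρv : ρ = v := by
        by_contra hρv
        obtain ⟨m, hmadj, hm⟩ := TreeHelp.exists_second hG (show v ≠ ρ from fun h => hρv h.symm)
        have hmu : m = u := huniqnb m hmadj
        rw [hmu] at hm
        rw [TreeHelp.mem_pathSet_iff hG] at hm
        have hd : G.dist ρ v + G.dist v u = G.dist ρ u := (TreeHelp.mem_pathSet_iff hG).1 hdesc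
        have e2 : G.dist u ρ = G.dist ρ u := SimpleGraph.dist_comm
        have e3 : G.dist v ρ = G.dist ρ v := SimpleGraph.dist_comm
        have e1 : G.dist v u ≠ 0 := fun h => hchild.ne ((TreeHelp.dist_zero hG).1 h)
        omega
      have hdescu : descend G ρ u = {y | y ≠ v} := by
        rw [hρv]
        ext y
        rw [mem_descend, Set.mem_setOf_eq]
        constructor
        · intro hy hyv
          rw [hyv] at hy
          rw [TreeHelp.pathSet_self hG] at hy
          exact hchild.ne' hy
        · intro hy
          obtain ⟨m, hmadj, hm⟩ := TreeHelp.exists_second hG (Ne.symm hy)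
          rwa [huniqnb m hmadj] at hm
      obtain ⟨PPu, hU, hD, hC, hSk, hCo⟩ :=
        (hrec u huhub (TreeHelp.mem_right hG ρ u) :
          FeasibleOn G f T (descend G ρ u) (S ∩ descend G ρ u))
      have hPusub : ∀ P ∈ PPu, P ⊆ descend G ρ u := by
        intro P hP
        rw [← hU]
        exact Set.subset_sUnion_of_mem hP
      show FeasibleOn G f T (descend G ρ v) (S ∩ descend G ρ v)
      have hdvv : descend G ρ v = Set.univ := by
        rw [hρv]
        exact Set.eq_univ_of_forall (fun y => TreeHelp.mem_left hG v y)
      have hvdesc : v ∈ descend G ρ v := TreeHelp.mem_right hG ρ v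
      refine ⟨insert {v} PPu, ?_, ?_, ?_, ?_, ?_⟩
      · rw [Set.sUnion_insert, hU, hdescu, hdvv]
        ext y
        by_cases hy : y = v <;> simp [hy]
      · rintro P hP Q hQ hPQ
        rw [Set.disjoint_left]
        intro a haP haQ
        rcases Set.mem_insert_iff.1 hP with rfl | hP'
        · rcases Set.mem_insert_iff.1 hQ with rfl | hQ'
          · exact hPQ rfl
          · obtain rfl : a = v := haP
            have hmem : a ∈ descend G ρ u := hPusub Q hQ' haQ
            rw [hdescu] at hmem
            exact hmem rfl
        · rcases Set.mem_insert_iff.1 hQ with rfl | hQ'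
          · obtain rfl : a = v := haQ
            have hmem : a ∈ descend G ρ u := hPusub P hP' haP
            rw [hdescu] at hmem
            exact hmem rfl
          · exact Set.disjoint_left.1 (hD P hP' Q hQ' hPQ) haP haQ
      · intro P hP
        rcases Set.mem_insert_iff.1 hP with rfl | hP'
        · exact TreeHelp.singleton_connected hG v
        · exact hC P hP'
      · intro P hP
        rcases Set.mem_insert_iff.1 hP with rfl | hP'
        · refine ⟨v, ⟨⟨hvS, hvdesc⟩, rfl⟩, ?_⟩
          rintro t ⟨-, ht⟩
          exact ht
        · obtain ⟨t, ht, htu⟩ := hSk P hP'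
          have htdesc : t ∈ descend G ρ v := by rw [hdvv]; trivial
          refine ⟨t, ⟨⟨ht.1.1, htdesc⟩, ht.2⟩, ?_⟩
          rintro t' ⟨⟨ht'S, -⟩, ht'P⟩
          exact htu t' ⟨⟨ht'S, hPusub P hP' ht'P⟩, ht'P⟩
      · intro P hP t ht
        rcases Set.mem_insert_iff.1 hP with rfl | hP'
        · obtain rfl : t = v := ht.2
          rw [hf.single]
          exact zero_le
        · exact hCo P hP' t ⟨⟨ht.1.1, hPusub P hP' ht.2⟩, ht.2⟩
    · -- `v` is not a sink: main construction.
      have hpvs_hub : pathSet G v s ⊆ hubSet G S := by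
        obtain ⟨s₁, hs₁, s₂, hs₂, hv12⟩ := TreeHelp.mem_hubSet_iff.1 hwhub
        rcases TreeHelp.tripod hG s₁ s₂ s hv12 with h | h
        · intro z hz
          exact TreeHelp.mem_hubSet_iff.2 ⟨s₁, hs₁, s, hsS, TreeHelp.btw_sub' hG h hz⟩
        · intro z hz
          have hz' : z ∈ pathSet G s v := by rwa [TreeHelp.pathSet_comm hG] at hz
          exact TreeHelp.mem_hubSet_iff.2 ⟨s, hsS, s₂, hs₂, TreeHelp.btw_sub hG h hz'⟩
      have hρu_ne : ρ ≠ v → ∃ m, G.Adj v m ∧ m ∈ pathSet G v ρ ∧ m ≠ u := by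
        intro hρv
        obtain ⟨m, hmadj, hm⟩ := TreeHelp.exists_second hG (show v ≠ ρ from fun h => hρv h.symm)
        refine ⟨m, hmadj, hm, ?_⟩
        intro hmu
        rw [hmu] at hm
        rw [TreeHelp.mem_pathSet_iff hG] at hm
        have hd : G.dist ρ v + G.dist v u = G.dist ρ u := (TreeHelp.mem_pathSet_iff hG).1 hdesc
        have e2 : G.dist u ρ = G.dist ρ u := SimpleGraph.dist_comm
        have e3 : G.dist v ρ = G.dist ρ v := SimpleGraph.dist_comm
        have e1 : G.dist v u ≠ 0 := fun h => hchild.ne ((TreeHelp.dist_zero hG).1 h)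
        omega
      have hbranch_desc : ∀ z, u ∈ pathSet G v z → v ∈ pathSet G ρ z := by
        intro z hz
        by_cases hρv : ρ = v
        · rw [hρv]; exact TreeHelp.mem_left hG v z
        · obtain ⟨m, hmadj, hmρ, hmu⟩ := hρu_ne hρv
          have hzbr : z ∈ branch G v u := (TreeHelp.branch_eq_pathSet hG hchild).2 hz
          have hρbr : ρ ∉ branch G v u := by
            intro hρ
            exact hmu (TreeHelp.second_unique hG hmadj hchild hmρ
              ((TreeHelp.branch_eq_pathSet hG hchild).1 hρ))
          rw [TreeHelp.pathSet_comm hG]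
          exact TreeHelp.sep hG hzbr hρbr
      have hsecond_on : ∀ z, z ∈ pathSet G v s → z ≠ v → u ∈ pathSet G v z := by
        intro z hz hzv
        rcases TreeHelp.tripod hG v s u hz with h | h
        · rw [TreeHelp.pathSet_adj hG hchild] at h
          rcases h with rfl | rfl
          · exact absurd rfl hzv
          · exact TreeHelp.mem_right hG v z
        · exact TreeHelp.mid2 hG hus h
      have hD1 : ∀ z ∈ pathSet G v s, v ∈ pathSet G ρ z := by
        intro z hz
        by_cases hzv : z = v
        · rw [hzv]; exact TreeHelp.mem_right hG ρ v
        · exact hbranch_desc z (hsecond_on z hz hzv)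
      have hC1 : ∀ y ∈ BP G S v s, pathSet G v y ⊆ BP G S v s := by
        intro y hy
        rcases TreeHelp.mem_BP_iff.1 hy with hy' | ⟨w', hw', η₀, ⟨hadj₀, hhub₀⟩, hybr⟩
        · intro z hz
          exact TreeHelp.mem_BP_iff.2 (Or.inl (TreeHelp.btw_sub hG hy' hz))
        · intro z hz
          rcases TreeHelp.tripod hG v y w' hz with h | h
          · exact TreeHelp.mem_BP_iff.2 (Or.inl (TreeHelp.btw_sub hG hw' h))
          · have hη₀ : η₀ ∈ pathSet G w' y := (TreeHelp.branch_eq_pathSet hG hadj₀).1 hybr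
            rcases TreeHelp.tripod hG w' y η₀ h with h2 | h2
            · rw [TreeHelp.pathSet_adj hG hadj₀] at h2
              rcases h2 with rfl | rfl
              · exact TreeHelp.mem_BP_iff.2 (Or.inl hw')
              · exact TreeHelp.mem_BP_iff.2 (Or.inr ⟨w', hw', _, ⟨hadj₀, hhub₀⟩,
                  TreeHelp.branch_self hG hadj₀⟩)
            · have hmem : η₀ ∈ pathSet G w' z := TreeHelp.mid2 hG hη₀ h2
              exact TreeHelp.mem_BP_iff.2 (Or.inr ⟨w', hw', η₀, ⟨hadj₀, hhub₀⟩,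
                (TreeHelp.branch_eq_pathSet hG hadj₀).2 hmem⟩)
      have hvBP : v ∈ BP G S v s := TreeHelp.mem_BP_iff.2 (Or.inl (TreeHelp.mem_left hG v s))
      have hsBP : s ∈ BP G S v s := TreeHelp.mem_BP_iff.2 (Or.inl (TreeHelp.mem_right hG v s))
      have hBPconn : (G.induce (BP G S v s)).Connected := TreeHelp.induce_connected hG hvBP hC1
      have hvP0 : v ∈ P0set G S ρ v s := ⟨hvBP, TreeHelp.mem_right hG ρ v⟩
      have hsdesc : v ∈ pathSet G ρ s := hD1 s (TreeHelp.mem_right hG v s)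
      have hsP0 : s ∈ P0set G S ρ v s := ⟨hsBP, hsdesc⟩
      have hP0cl : ∀ y ∈ P0set G S ρ v s, pathSet G v y ⊆ P0set G S ρ v s := by
        rintro y ⟨hyBP, hydesc⟩ z hz
        exact ⟨hC1 y hyBP hz, TreeHelp.mid2 hG hydesc hz⟩
      have hP0conn : (G.induce (P0set G S ρ v s)).Connected :=
        TreeHelp.induce_connected hG hvP0 hP0cl
      have hcost : f (P0set G S ρ v s) s ≤ T :=
        le_trans (hf.setMono (P0set G S ρ v s) (BP G S v s) s hsP0 Set.inter_subset_left
          hP0conn hBPconn) hbp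
      have huniqS : ∀ t, t ∈ S → t ∈ BP G S v s → t = s := by
        intro t htS htBP
        by_contra hts
        rcases TreeHelp.mem_BP_iff.1 htBP with ht | ⟨w', hw', η₀, ⟨hadj₀, hhub₀⟩, htbr⟩
        · have htv : t ≠ v := by rintro rfl; exact hvS htS
          obtain ⟨n₁, hn₁adj, hn₁⟩ := TreeHelp.exists_second hG htv
          obtain ⟨n₂, hn₂adj, hn₂⟩ := TreeHelp.exists_second hG hts
          obtain ⟨m, -, hm⟩ := hleaf t htS
          have hn12 : n₂ = n₁ := (hm n₂ hn₂adj).trans (hm n₁ hn₁adj).symm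
          rw [hn12] at hn₂
          rw [TreeHelp.mem_pathSet_iff hG] at ht hn₁ hn₂
          have hd1 : G.dist t n₁ ≠ 0 := fun h => hn₁adj.ne ((TreeHelp.dist_zero hG).1 h)
          have tri : G.dist v s ≤ G.dist v n₁ + G.dist n₁ s := hcon.dist_triangle
          have c1 : G.dist n₁ v = G.dist v n₁ := SimpleGraph.dist_comm
          have c2 : G.dist t v = G.dist v t := SimpleGraph.dist_comm
          omega
        · apply hhub₀
          by_cases hsw : s = w'
          · have hη₀ : η₀ ∈ pathSet G w' t := (TreeHelp.branch_eq_pathSet hG hadj₀).1 htbr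
            exact TreeHelp.mem_hubSet_iff.2 ⟨s, hsS, t, htS, by rw [hsw]; exact hη₀⟩
          · have hsnbr : s ∉ branch G w' η₀ := by
              intro hs'
              have hη₀s : η₀ ∈ pathSet G w' s := (TreeHelp.branch_eq_pathSet hG hadj₀).1 hs'
              exact hhub₀ (hpvs_hub (TreeHelp.btw_sub' hG hw' hη₀s))
            have hw'ts : w' ∈ pathSet G t s := TreeHelp.sep hG htbr hsnbr
            have hη₀' : η₀ ∈ pathSet G t w' := by
              rw [TreeHelp.pathSet_comm hG]
              exact (TreeHelp.branch_eq_pathSet hG hadj₀).1 htbr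
            exact TreeHelp.mem_hubSet_iff.2 ⟨t, htS, s, hsS, TreeHelp.btw_sub hG hw'ts hη₀'⟩
      have hNne : ∀ η ∈ Nset G S ρ v s, η ≠ v := by
        intro η hη h
        rw [h] at hη
        exact (mem_Nset.1 hη).2.1 hvP0
      have hSSfeas : ∀ η : V, ∃ QQ : Set (Set V), η ∈ Nset G S ρ v s →
          ((⋃₀ QQ = descend G ρ η) ∧
           (∀ P ∈ QQ, ∀ Q ∈ QQ, P ≠ Q → Disjoint P Q) ∧
           (∀ P ∈ QQ, (G.induce P).Connected) ∧
           (∀ P ∈ QQ, ∃! t, t ∈ (S ∩ descend G ρ η) ∩ P) ∧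
           (∀ P ∈ QQ, ∀ t ∈ (S ∩ descend G ρ η) ∩ P, f P t ≤ T)) := by
        intro η
        by_cases hη : η ∈ Nset G S ρ v s
        · obtain ⟨QQ, h1, h2, h3, h4, h5⟩ :=
            (SSne η (mem_Nset.1 hη).1 (mem_Nset.1 hη).2.2.1 (hNne η hη) :
              FeasibleOn G f T (descend G ρ η) (S ∩ descend G ρ η))
          exact ⟨QQ, fun _ => ⟨h1, h2, h3, h4, h5⟩⟩
        · exact ⟨∅, fun h => absurd h hη⟩
      choose PPf hPPf using hSSfeas
      have hPsub : ∀ η ∈ Nset G S ρ v s, ∀ P ∈ PPf η, ∀ y ∈ P, η ∈ pathSet G ρ y := by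
        intro η hη P hP y hy
        have hmem : y ∈ ⋃₀ PPf η := ⟨P, hP, hy⟩
        rw [(hPPf η hη).1] at hmem
        exact hmem
      have hdisjP0 : ∀ η ∈ Nset G S ρ v s, ∀ y ∈ P0set G S ρ v s, η ∉ pathSet G ρ y := by
        rintro η hη y ⟨hyBP, hydesc⟩ hηy
        have hηvy : η ∈ pathSet G v y := TreeHelp.chain hG (mem_Nset.1 hη).2.2.1 hηy
        exact (mem_Nset.1 hη).2.1 ⟨hC1 y hyBP hηvy, (mem_Nset.1 hη).2.2.1⟩
      have hkey2 : ∀ η ∈ Nset G S ρ v s, ∀ η' ∈ Nset G S ρ v s,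
          η ∈ pathSet G ρ η' → η = η' := by
        rintro η hη η' hη' hηη'
        have hηvη' : η ∈ pathSet G v η' := TreeHelp.chain hG (mem_Nset.1 hη).2.2.1 hηη'
        obtain ⟨x', hx'P0, hx'adj⟩ := (mem_Nset.1 hη').2.2.2
        rcases TreeHelp.tripod hG v η' x' hηvη' with h | h
        · exact absurd (⟨hC1 x' hx'P0.1 h, (mem_Nset.1 hη).2.2.1⟩ : η ∈ P0set G S ρ v s) (mem_Nset.1 hη).2.1
        · rw [TreeHelp.pathSet_adj hG hx'adj] at h
          rcases h with rfl | rfl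
          · exact absurd hx'P0 (mem_Nset.1 hη).2.1
          · rfl
      have hdescdisj : ∀ η ∈ Nset G S ρ v s, ∀ η' ∈ Nset G S ρ v s, η ≠ η' →
          ∀ y, η ∈ pathSet G ρ y → η' ∈ pathSet G ρ y → False := by
        intro η hη η' hη' hne y h1 h2
        rcases TreeHelp.tripod hG ρ y η h2 with h | h
        · exact hne (hkey2 η' hη' η hη h).symm
        · exact hne (hkey2 η hη η' hη' (TreeHelp.mid2 hG h1 h))
      have hF3 : ∀ n : ℕ, ∀ y, G.dist v y = n → v ∈ pathSet G ρ y →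
          y ∈ P0set G S ρ v s ∨ ∃ η ∈ Nset G S ρ v s, η ∈ pathSet G ρ y := by
        intro n
        induction n using Nat.strong_induction_on with
        | _ n ih =>
          intro y hdy hρy
          by_cases hyP : y ∈ P0set G S ρ v s
          · exact Or.inl hyP
          · have hyv : y ≠ v := by rintro rfl; exact hyP hvP0
            obtain ⟨x, hxadj', hx⟩ := TreeHelp.exists_second hG hyv
            have hxvy : x ∈ pathSet G v y := by rwa [TreeHelp.pathSet_comm hG] at hx
            have hxadj : G.Adj x y := hxadj'.symm
            have hxdesc : v ∈ pathSet G ρ x := TreeHelp.mid2 hG hρy hxvy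
            have hxρy : x ∈ pathSet G ρ y := TreeHelp.btw_sub' hG hρy hxvy
            by_cases hxP : x ∈ P0set G S ρ v s
            · have hyhub : y ∈ hubSet G S := by
                by_contra hyhub
                rcases TreeHelp.mem_BP_iff.1 hxP.1 with hxp | ⟨w', hw', η₀, ⟨hadj₀, hhub₀⟩, hxbr⟩
                · exact hyP ⟨TreeHelp.mem_BP_iff.2 (Or.inr ⟨x, hxp, y, ⟨hxadj, hyhub⟩,
                    TreeHelp.branch_self hG hxadj⟩), hρy⟩
                · have hw'P0 : w' ∈ P0set G S ρ v s :=
                    ⟨TreeHelp.mem_BP_iff.2 (Or.inl hw'), hD1 w' hw'⟩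
                  have hyw' : y ≠ w' := by rintro rfl; exact hyP hw'P0
                  obtain ⟨q, hqw, -⟩ := hxbr
                  have hybr : y ∈ branch G w' η₀ := by
                    refine ⟨q.concat hxadj, ?_, fun z _ => Set.mem_univ z⟩
                    rw [SimpleGraph.Walk.support_concat]
                    intro hw
                    rcases List.mem_append.1 hw with h' | h'
                    · exact hqw h'
                    · exact hyw' (List.mem_singleton.1 h').symm
                  exact hyP ⟨TreeHelp.mem_BP_iff.2 (Or.inr ⟨w', hw', η₀, ⟨hadj₀, hhub₀⟩, hybr⟩), hρy⟩
              exact Or.inr ⟨y, ⟨hyhub, hyP, hρy, ⟨x, hxP, hxadj⟩⟩, TreeHelp.mem_right hG ρ y⟩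
            · have hlt : G.dist v x < n := by
                rw [TreeHelp.mem_pathSet_iff hG] at hxvy
                have hxy0 : G.dist x y ≠ 0 := fun h => hxadj.ne ((TreeHelp.dist_zero hG).1 h)
                omega
              rcases ih _ hlt x rfl hxdesc with h | ⟨η, hη, hbtw⟩
              · exact absurd h hxP
              · exact Or.inr ⟨η, hη, TreeHelp.btw_sub hG hxρy hbtw⟩
      show FeasibleOn G f T (descend G ρ v) (S ∩ descend G ρ v)
      refine ⟨insert (P0set G S ρ v s) {P | ∃ η ∈ Nset G S ρ v s, P ∈ PPf η}, ?_, ?_, ?_, ?_, ?_⟩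
      · apply Set.eq_of_subset_of_subset
        · rintro y ⟨P, hP, hyP⟩
          rcases Set.mem_insert_iff.1 hP with rfl | ⟨η, hη, hPη⟩
          · exact hyP.2
          · exact TreeHelp.compose hG (mem_Nset.1 hη).2.2.1 (hPsub η hη P hPη y hyP)
        · intro y hy
          rcases hF3 (G.dist v y) y rfl hy with h | ⟨η, hη, hbtw⟩
          · exact ⟨P0set G S ρ v s, Set.mem_insert _ _, h⟩
          · have hmem : y ∈ ⋃₀ PPf η := by
              rw [(hPPf η hη).1]
              exact hbtw
            obtain ⟨P, hPη, hyP⟩ := hmem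
            exact ⟨P, Set.mem_insert_iff.2 (Or.inr ⟨η, hη, hPη⟩), hyP⟩
      · rintro P hP Q hQ hPQ
        rw [Set.disjoint_left]
        intro a haP haQ
        rcases Set.mem_insert_iff.1 hP with rfl | ⟨η, hη, hPη⟩
        · rcases Set.mem_insert_iff.1 hQ with rfl | ⟨η', hη', hQη'⟩
          · exact hPQ rfl
          · exact hdisjP0 η' hη' a haP (hPsub η' hη' Q hQη' a haQ)
        · rcases Set.mem_insert_iff.1 hQ with rfl | ⟨η', hη', hQη'⟩
          · exact hdisjP0 η hη a haQ (hPsub η hη P hPη a haP)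
          · by_cases hηη' : η = η'
            · subst hηη'
              exact Set.disjoint_left.1 ((hPPf η hη).2.1 P hPη Q hQη' hPQ) haP haQ
            · exact hdescdisj η hη η' hη' hηη' a (hPsub η hη P hPη a haP)
                (hPsub η' hη' Q hQη' a haQ)
      · intro P hP
        rcases Set.mem_insert_iff.1 hP with rfl | ⟨η, hη, hPη⟩
        · exact hP0conn
        · exact (hPPf η hη).2.2.1 P hPη
      · intro P hP
        rcases Set.mem_insert_iff.1 hP with rfl | ⟨η, hη, hPη⟩
        · refine ⟨s, ⟨⟨hsS, hsdesc⟩, hsP0⟩, ?_⟩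
          rintro t ⟨⟨htS, -⟩, htP0⟩
          exact huniqS t htS htP0.1
        · obtain ⟨t, ht, htu⟩ := (hPPf η hη).2.2.2.1 P hPη
          refine ⟨t, ⟨⟨ht.1.1, TreeHelp.compose hG (mem_Nset.1 hη).2.2.1 (hPsub η hη P hPη t ht.2)⟩, ht.2⟩, ?_⟩
          rintro t' ⟨⟨ht'S, -⟩, ht'P⟩
          exact htu t' ⟨⟨ht'S, hPsub η hη P hPη t' ht'P⟩, ht'P⟩
      · intro P hP t ht
        rcases Set.mem_insert_iff.1 hP with rfl | ⟨η, hη, hPη⟩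
        · have hts : t = s := huniqS t ht.1.1 ht.2.1
          rw [hts]
          exact hcost
        · exact (hPPf η hη).2.2.2.2 P hPη t ⟨⟨ht.1.1, hPsub η hη P hPη t ht.2⟩, ht.2⟩
  · exact SSne w hwhub hwd' hwv
end
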